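/- arXiv:1802.04324 — 3 statements merged into one kernel-verified Lean document; each statement's English description precedes it below -/
import Mathlib

section
/- Let R be an alternative ring containing a nontrivial idempotent e₁ satisfying conditions (i) and (ii). Then every Lie triple derivable map D : R → R is almost additive: for all a, b ∈ R there exists z ∈ Z(R) (depending on a and b) such that D(a + b) = D(a) + D(b) + z. -/
/-- The Lie bracket (commutator) in a not-necessarily-associative ring. -/
def lieBr {R : Type*} [NonUnitalNonAssocRing R] (x y : R) : R := x * y - y * x

/-- `R` is an alternative ring: `(x*x)*y = x*(x*y)` and `(y*x)*x = y*(x*x)`. -/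
def IsAlternative (R : Type*) [NonUnitalNonAssocRing R] : Prop :=
  (∀ x y : R, x * x * y = x * (x * y)) ∧ (∀ x y : R, y * x * x = y * (x * x))

/-- The centre of a not-necessarily-associative ring: elements `r` whose associators
`(r,x,y)`, `(x,r,y)`, `(x,y,r)` all vanish and which commute with everything. -/
def ringCenter (R : Type*) [NonUnitalNonAssocRing R] : Set R :=
  {r | (∀ x y : R, r * x * y = r * (x * y)) ∧ (∀ x y : R, x * r * y = x * (r * y)) ∧
       (∀ x y : R, x * y * r = x * (y * r)) ∧ (∀ x : R, r * x = x * r)}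

/-- `e` is a nontrivial idempotent: idempotent, nonzero and not a multiplicative identity. -/
def IsNontrivialIdempotent {R : Type*} [NonUnitalNonAssocRing R] (e : R) : Prop :=
  e * e = e ∧ e ≠ 0 ∧ ¬ (∀ x : R, e * x = x ∧ x * e = x)

/-- Peirce component `R₁₁` relative to the idempotent `e`. -/
def peirce11 {R : Type*} [NonUnitalNonAssocRing R] (e : R) : Set R :=
  {x | e * x = x ∧ x * e = x}

/-- Peirce component `R₁₂` relative to the idempotent `e`. -/
def peirce12 {R : Type*} [NonUnitalNonAssocRing R] (e : R) : Set R :=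
  {x | e * x = x ∧ x * e = 0}

/-- Peirce component `R₂₁` relative to the idempotent `e`. -/
def peirce21 {R : Type*} [NonUnitalNonAssocRing R] (e : R) : Set R :=
  {x | e * x = 0 ∧ x * e = x}

/-- Peirce component `R₂₂` relative to the idempotent `e`. -/
def peirce22 {R : Type*} [NonUnitalNonAssocRing R] (e : R) : Set R :=
  {x | e * x = 0 ∧ x * e = 0}

/-- Condition (i): if `a₁₁ + a₂₂` commutes with every element of `R₁₂`, it is central. -/
def CondI {R : Type*} [NonUnitalNonAssocRing R] (e : R) : Prop :=
  ∀ a b : R, a ∈ peirce11 e → b ∈ peirce22 e →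
    (∀ m ∈ peirce12 e, lieBr (a + b) m = 0) → a + b ∈ ringCenter R

/-- Condition (ii): if `a₁₁ + a₂₂` commutes with every element of `R₂₁`, it is central. -/
def CondII {R : Type*} [NonUnitalNonAssocRing R] (e : R) : Prop :=
  ∀ a b : R, a ∈ peirce11 e → b ∈ peirce22 e →
    (∀ m ∈ peirce21 e, lieBr (a + b) m = 0) → a + b ∈ ringCenter R

/-- A map `φ` is Lie multiplicative if `φ [x,y] = [φ x, φ y]`. -/
def IsLieMultiplicative {R R' : Type*} [NonUnitalNonAssocRing R] [NonUnitalNonAssocRing R']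
    (φ : R → R') : Prop :=
  ∀ x y : R, φ (lieBr x y) = lieBr (φ x) (φ y)

/-- A map `D` is Lie triple derivable if
`D [[x,y],z] = [[D x,y],z] + [[x,D y],z] + [[x,y],D z]`. -/
def IsLieTripleDerivable {R : Type*} [NonUnitalNonAssocRing R] (D : R → R) : Prop :=
  ∀ x y z : R, D (lieBr (lieBr x y) z) =
    lieBr (lieBr (D x) y) z + lieBr (lieBr x (D y)) z + lieBr (lieBr x y) (D z)

/-- A map `D` is Lie derivable if `D [x,y] = [D x, y] + [x, D y]`. -/
def IsLieDerivable {R : Type*} [NonUnitalNonAssocRing R] (D : R → R) : Prop :=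
  ∀ x y : R, D (lieBr x y) = lieBr (D x) y + lieBr x (D y)

/-- `I` is a two-sided ideal (as a set) of the not-necessarily-associative ring `R`. -/
def IsTwoSidedIdealSet {R : Type*} [NonUnitalNonAssocRing R] (I : Set R) : Prop :=
  (0 : R) ∈ I ∧ (∀ a b : R, a ∈ I → b ∈ I → a + b ∈ I) ∧ (∀ a : R, a ∈ I → -a ∈ I) ∧
  (∀ r a : R, a ∈ I → r * a ∈ I ∧ a * r ∈ I)

/-- `R` is prime: for any two nonzero two-sided ideals `A`, `B`, some product `a*b` with
`a ∈ A`, `b ∈ B` is nonzero (i.e. `A·B ≠ 0`). -/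
def IsPrimeRing (R : Type*) [NonUnitalNonAssocRing R] : Prop :=
  ∀ A B : Set R, IsTwoSidedIdealSet A → IsTwoSidedIdealSet B → A ≠ {0} → B ≠ {0} →
    ∃ a ∈ A, ∃ b ∈ B, a * b ≠ 0

/-- `R` is 3-torsion free: `3x = 0` implies `x = 0`. -/
def ThreeTorsionFree (R : Type*) [NonUnitalNonAssocRing R] : Prop :=
  ∀ x : R, x + x + x = 0 → x = 0

/- ===================== Auxiliary development ===================== -/

section LTDAux

variable {R : Type*} [NonUnitalNonAssocRing R]

lemma ltd_br_add_l (x y z : R) : lieBr (x + y) z = lieBr x z + lieBr y z := by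
  simp only [lieBr, add_mul, mul_add]; abel

lemma ltd_br_zero_l (z : R) : lieBr 0 z = 0 := by
  simp [lieBr]

lemma ltd_br_neg_l (x z : R) : lieBr (-x) z = -lieBr x z := by
  simp only [lieBr, neg_mul, mul_neg]; abel

lemma ltd_center_br {z : R} (hz : z ∈ ringCenter R) (x : R) : lieBr z x = 0 := by
  have h := hz.2.2.2 x
  simp only [lieBr, h, sub_self]

/-- Associator. -/
def ltdAsc (x y z : R) : R := x * y * z - x * (y * z)

lemma ltd_ll (hR : IsAlternative R) (u v w : R) : ltdAsc u v w = -ltdAsc v u w := by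
  have h0 : ltdAsc (u + v) (u + v) w = 0 := by
    simp only [ltdAsc]; rw [hR.1 (u + v) w, sub_self]
  have hu : ltdAsc u u w = 0 := by simp only [ltdAsc]; rw [hR.1 u w, sub_self]
  have hv : ltdAsc v v w = 0 := by simp only [ltdAsc]; rw [hR.1 v w, sub_self]
  have hexp : ltdAsc (u + v) (u + v) w
      = ltdAsc u u w + ltdAsc u v w + (ltdAsc v u w + ltdAsc v v w) := by
    simp only [ltdAsc, add_mul, mul_add]; abel
  rw [hexp, hu, hv] at h0
  have h1 : ltdAsc u v w + ltdAsc v u w = 0 := by rw [← h0]; abel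
  exact eq_neg_of_add_eq_zero_left h1

lemma ltd_rl (hR : IsAlternative R) (u v w : R) : ltdAsc u v w = -ltdAsc u w v := by
  have h0 : ltdAsc u (v + w) (v + w) = 0 := by
    simp only [ltdAsc]; rw [hR.2 (v + w) u, sub_self]
  have hv : ltdAsc u v v = 0 := by simp only [ltdAsc]; rw [hR.2 v u, sub_self]
  have hw : ltdAsc u w w = 0 := by simp only [ltdAsc]; rw [hR.2 w u, sub_self]
  have hexp : ltdAsc u (v + w) (v + w)
      = ltdAsc u v v + ltdAsc u v w + (ltdAsc u w v + ltdAsc u w w) := by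
    simp only [ltdAsc, add_mul, mul_add]; abel
  rw [hexp, hv, hw] at h0
  have h1 : ltdAsc u v w + ltdAsc u w v = 0 := by rw [← h0]; abel
  exact eq_neg_of_add_eq_zero_left h1

lemma ltd_flexlin (hR : IsAlternative R) (x u y : R) : ltdAsc x u y = -ltdAsc y u x := by
  rw [ltd_ll hR x u y, ltd_rl hR u x y, ltd_ll hR u y x, neg_neg]

variable {e : R}

/- ------------------- Peirce multiplication rules ------------------- -/

lemma ltd_p11_12 (hR : IsAlternative R) {x y : R}
    (hx : x ∈ peirce11 e) (hy : y ∈ peirce12 e) : x * y ∈ peirce12 e := by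
  constructor
  · have h := ltd_ll hR e x y
    simp only [ltdAsc, hx.1, hx.2, hy.1] at h
    rw [sub_self, neg_zero, sub_eq_zero] at h
    exact h.symm
  · have h := ltd_rl hR x y e
    simp only [ltdAsc, hx.2, hy.1, hy.2, mul_zero] at h
    rw [sub_zero, sub_self, neg_zero] at h
    exact h

lemma ltd_p12_22 (hR : IsAlternative R) {x y : R}
    (hx : x ∈ peirce12 e) (hy : y ∈ peirce22 e) : x * y ∈ peirce12 e := by
  constructor
  · have h := ltd_ll hR e x y
    simp only [ltdAsc, hx.1, hx.2, hy.1, zero_mul, mul_zero] at h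
    rw [sub_self, neg_zero, sub_eq_zero] at h
    exact h.symm
  · have h := ltd_rl hR x y e
    simp only [ltdAsc, hx.2, hy.1, hy.2, zero_mul, mul_zero] at h
    rw [sub_zero, sub_self, neg_zero] at h
    exact h

lemma ltd_p12_21 (hR : IsAlternative R) {x y : R}
    (hx : x ∈ peirce12 e) (hy : y ∈ peirce21 e) : x * y ∈ peirce11 e := by
  constructor
  · have h := ltd_ll hR e x y
    simp only [ltdAsc, hx.1, hx.2, hy.1, zero_mul, mul_zero] at h
    rw [sub_self, neg_zero, sub_eq_zero] at h
    exact h.symm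
  · have h := ltd_rl hR x y e
    simp only [ltdAsc, hx.2, hy.1, hy.2, zero_mul, mul_zero] at h
    rw [sub_self, neg_zero, sub_eq_zero] at h
    exact h

lemma ltd_p21_12 (hR : IsAlternative R) {x y : R}
    (hx : x ∈ peirce21 e) (hy : y ∈ peirce12 e) : x * y ∈ peirce22 e := by
  constructor
  · have h := ltd_ll hR e x y
    simp only [ltdAsc, hx.1, hx.2, hy.1, zero_mul, mul_zero] at h
    rw [sub_self, neg_zero, zero_sub, neg_eq_zero] at h
    exact h
  · have h := ltd_rl hR x y e
    simp only [ltdAsc, hx.2, hy.1, hy.2, zero_mul, mul_zero] at h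
    rw [sub_self, neg_zero, sub_zero] at h
    exact h

lemma ltd_p12_12 (hR : IsAlternative R) {x y : R}
    (hx : x ∈ peirce12 e) (hy : y ∈ peirce12 e) : x * y ∈ peirce21 e := by
  constructor
  · have h := ltd_ll hR e x y
    simp only [ltdAsc, hx.1, hx.2, hy.1, zero_mul, mul_zero] at h
    rw [zero_sub, neg_neg, sub_eq_self] at h
    exact h
  · have h := ltd_rl hR x y e
    simp only [ltdAsc, hx.2, hy.1, hy.2, zero_mul, mul_zero] at h
    rw [sub_zero, zero_sub, neg_neg] at h
    exact h

lemma ltd_p21_21 (hR : IsAlternative R) {x y : R}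
    (hx : x ∈ peirce21 e) (hy : y ∈ peirce21 e) : x * y ∈ peirce12 e := by
  constructor
  · have h := ltd_ll hR e x y
    simp only [ltdAsc, hx.1, hx.2, hy.1, zero_mul, mul_zero] at h
    rw [zero_sub, sub_zero, neg_inj] at h
    exact h
  · have h := ltd_rl hR x y e
    simp only [ltdAsc, hx.2, hy.1, hy.2, zero_mul, mul_zero] at h
    rw [sub_zero, sub_eq_iff_eq_add, neg_add_cancel] at h
    exact h

lemma ltd_p21_11 (hR : IsAlternative R) {x y : R}
    (hx : x ∈ peirce21 e) (hy : y ∈ peirce11 e) : x * y ∈ peirce21 e := by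
  constructor
  · have h := ltd_ll hR e x y
    simp only [ltdAsc, hx.1, hx.2, hy.1, zero_mul, mul_zero] at h
    rw [sub_self, neg_zero, zero_sub, neg_eq_zero] at h
    exact h
  · have h := ltd_rl hR x y e
    simp only [ltdAsc, hx.2, hy.1, hy.2, zero_mul, mul_zero] at h
    rw [sub_self, neg_zero, sub_eq_zero] at h
    exact h

lemma ltd_p22_21 (hR : IsAlternative R) {x y : R}
    (hx : x ∈ peirce22 e) (hy : y ∈ peirce21 e) : x * y ∈ peirce21 e := by
  constructor
  · have h := ltd_ll hR e x y
    simp only [ltdAsc, hx.1, hx.2, hy.1, zero_mul, mul_zero] at h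
    rw [sub_self, neg_zero, zero_sub, neg_eq_zero] at h
    exact h
  · have h := ltd_rl hR x y e
    simp only [ltdAsc, hx.2, hy.1, hy.2, zero_mul, mul_zero] at h
    rw [sub_self, neg_zero, sub_eq_zero] at h
    exact h

lemma ltd_p12_11 (hR : IsAlternative R) {x y : R}
    (hx : x ∈ peirce12 e) (hy : y ∈ peirce11 e) : x * y = 0 := by
  have h := ltd_flexlin hR x e y
  simp only [ltdAsc, hx.1, hx.2, hy.1, hy.2, zero_mul, mul_zero] at h
  rw [sub_self, neg_zero, zero_sub, neg_eq_zero] at h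
  exact h

lemma ltd_p11_21 (hR : IsAlternative R) {x y : R}
    (hx : x ∈ peirce11 e) (hy : y ∈ peirce21 e) : x * y = 0 := by
  have h := ltd_flexlin hR x e y
  simp only [ltdAsc, hx.1, hx.2, hy.1, hy.2, zero_mul, mul_zero] at h
  rw [sub_self, neg_zero, sub_zero] at h
  exact h

lemma ltd_p22_12 (hR : IsAlternative R) {x y : R}
    (hx : x ∈ peirce22 e) (hy : y ∈ peirce12 e) : x * y = 0 := by
  have h := ltd_flexlin hR x e y
  simp only [ltdAsc, hx.1, hx.2, hy.1, hy.2, zero_mul, mul_zero] at h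
  rw [sub_self, neg_zero, zero_sub, neg_eq_zero] at h
  exact h

lemma ltd_p21_22 (hR : IsAlternative R) {x y : R}
    (hx : x ∈ peirce21 e) (hy : y ∈ peirce22 e) : x * y = 0 := by
  have h := ltd_flexlin hR x e y
  simp only [ltdAsc, hx.1, hx.2, hy.1, hy.2, zero_mul, mul_zero] at h
  rw [sub_self, neg_zero, sub_zero] at h
  exact h

/- ------------------- closure of Peirce components ------------------- -/

lemma ltd_p12_add {x y : R} (hx : x ∈ peirce12 e) (hy : y ∈ peirce12 e) :
    x + y ∈ peirce12 e :=
  ⟨by rw [mul_add, hx.1, hy.1], by rw [add_mul, hx.2, hy.2, add_zero]⟩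

lemma ltd_p12_sub {x y : R} (hx : x ∈ peirce12 e) (hy : y ∈ peirce12 e) :
    x - y ∈ peirce12 e :=
  ⟨by rw [mul_sub, hx.1, hy.1], by rw [sub_mul, hx.2, hy.2, sub_zero]⟩

lemma ltd_p21_add {x y : R} (hx : x ∈ peirce21 e) (hy : y ∈ peirce21 e) :
    x + y ∈ peirce21 e :=
  ⟨by rw [mul_add, hx.1, hy.1, add_zero], by rw [add_mul, hx.2, hy.2]⟩

lemma ltd_p21_sub {x y : R} (hx : x ∈ peirce21 e) (hy : y ∈ peirce21 e) :
    x - y ∈ peirce21 e :=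
  ⟨by rw [mul_sub, hx.1, hy.1, sub_zero], by rw [sub_mul, hx.2, hy.2]⟩

/- ------------------- idempotent identities & decomposition ------------------- -/

lemma ltd_eem (hR : IsAlternative R) (he : e * e = e) (z : R) : e * (e * z) = e * z := by
  have h := hR.1 e z
  rw [he] at h
  exact h.symm

lemma ltd_mee (hR : IsAlternative R) (he : e * e = e) (z : R) : z * e * e = z * e := by
  have h := hR.2 e z
  rw [he] at h
  exact h

lemma ltd_flexe (hR : IsAlternative R) (he : e * e = e) (z : R) : e * z * e = e * (z * e) := by
  have h := ltd_ll hR e z e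
  have h2 : ltdAsc z e e = 0 := by
    simp only [ltdAsc]; rw [hR.2 e z, sub_self]
  rw [h2, neg_zero] at h
  have h3 : e * z * e - e * (z * e) = 0 := h
  exact sub_eq_zero.mp h3

lemma ltd_dec11 (hR : IsAlternative R) (he : e * e = e) (x : R) :
    e * (x * e) ∈ peirce11 e := by
  refine ⟨ltd_eem hR he (x * e), ?_⟩
  rw [← ltd_flexe hR he x]
  exact ltd_mee hR he (e * x)

lemma ltd_dec12 (hR : IsAlternative R) (he : e * e = e) (x : R) :
    e * x - e * (x * e) ∈ peirce12 e := by
  constructor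
  · rw [mul_sub, ltd_eem hR he x, ltd_eem hR he (x * e)]
  · rw [sub_mul, (ltd_dec11 hR he x).2, ← ltd_flexe hR he x, sub_self]

lemma ltd_dec21 (hR : IsAlternative R) (he : e * e = e) (x : R) :
    x * e - e * (x * e) ∈ peirce21 e := by
  constructor
  · rw [mul_sub, ltd_eem hR he (x * e), sub_self]
  · rw [sub_mul, ltd_mee hR he x, (ltd_dec11 hR he x).2]

lemma ltd_dec22 (hR : IsAlternative R) (he : e * e = e) (x : R) :
    x - e * x - x * e + e * (x * e) ∈ peirce22 e := by
  constructor
  · simp only [mul_add, mul_sub, ltd_eem hR he]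
    abel
  · simp only [add_mul, sub_mul, ltd_mee hR he, (ltd_dec11 hR he x).2]
    rw [← ltd_flexe hR he x]
    abel

/- ------------------- bracket facts ------------------- -/

lemma ltd_br12_e {x : R} (hx : x ∈ peirce12 e) : lieBr x e = -x := by
  simp only [lieBr]; rw [hx.2, hx.1, zero_sub]

lemma ltd_br21_e {x : R} (hx : x ∈ peirce21 e) : lieBr x e = x := by
  simp only [lieBr]; rw [hx.2, hx.1, sub_zero]

lemma ltd_br_br_e (hR : IsAlternative R) (he : e * e = e) (x : R) :
    lieBr (lieBr x e) e = (e * x - e * (x * e)) + (x * e - e * (x * e)) := by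
  simp only [lieBr, sub_mul, mul_sub, ltd_mee hR he, ltd_eem hR he]
  rw [ltd_flexe hR he x]
  abel

lemma ltd_offdiag (hR : IsAlternative R) (he : e * e = e) {t : R}
    (h : lieBr (lieBr t e) e = 0) : e * t = e * (t * e) ∧ t * e = e * (t * e) := by
  have hq := ltd_br_br_e hR he t
  rw [h] at hq
  have h1 : e * t - e * (t * e) = 0 := by
    calc e * t - e * (t * e)
        = e * ((e * t - e * (t * e)) + (t * e - e * (t * e))) := by
          rw [mul_add, (ltd_dec12 hR he t).1, (ltd_dec21 hR he t).1, add_zero]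
      _ = 0 := by rw [← hq, mul_zero]
  have h3 : t * e - e * (t * e) = 0 := by
    rw [h1, zero_add] at hq
    exact hq.symm
  exact ⟨sub_eq_zero.mp h1, sub_eq_zero.mp h3⟩

/- ------------------- endgame lemmas ------------------- -/

lemma ltd_endgameI (hR : IsAlternative R) (he : e * e = e) (hi : CondI e) {t : R}
    (h0 : lieBr (lieBr t e) e = 0)
    (h1 : ∀ m ∈ peirce12 e, lieBr (lieBr t m) e = 0) : t ∈ ringCenter R := by
  obtain ⟨ht1, ht2⟩ := ltd_offdiag hR he h0
  have m1 : e * (t * e) ∈ peirce11 e := ltd_dec11 hR he t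
  have m2 : t - e * (t * e) ∈ peirce22 e := by
    constructor
    · rw [mul_sub, ht1, ltd_eem hR he (t * e), sub_self]
    · rw [sub_mul, (ltd_dec11 hR he t).2]
      exact sub_eq_zero.mpr ht2
  have hsum : e * (t * e) + (t - e * (t * e)) = t := by abel
  have hcomm : ∀ m ∈ peirce12 e, lieBr (e * (t * e) + (t - e * (t * e))) m = 0 := by
    intro m hm
    rw [hsum]
    have hz1 : (t - e * (t * e)) * m = 0 := ltd_p22_12 hR m2 hm
    have hz2 : m * (e * (t * e)) = 0 := ltd_p12_11 hR hm m1
    have hrw : lieBr t m = (e * (t * e)) * m - m * (t - e * (t * e)) := by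
      have a1 : t * m = (e * (t * e)) * m + (t - e * (t * e)) * m := by
        conv_lhs => rw [← hsum]
        rw [add_mul]
      have a2 : m * t = m * (e * (t * e)) + m * (t - e * (t * e)) := by
        conv_lhs => rw [← hsum]
        rw [mul_add]
      simp only [lieBr]
      rw [a1, a2, hz1, hz2]
      abel
    have hmem : lieBr t m ∈ peirce12 e := by
      rw [hrw]
      exact ltd_p12_sub (ltd_p11_12 hR m1 hm) (ltd_p12_22 hR hm m2)
    have h2 := h1 m hm
    rw [ltd_br12_e hmem] at h2
    exact neg_eq_zero.mp h2
  have hfin := hi _ _ m1 m2 hcomm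
  rwa [hsum] at hfin

lemma ltd_endgameII (hR : IsAlternative R) (he : e * e = e) (hii : CondII e) {t : R}
    (h0 : lieBr (lieBr t e) e = 0)
    (h1 : ∀ m ∈ peirce21 e, lieBr (lieBr t m) e = 0) : t ∈ ringCenter R := by
  obtain ⟨ht1, ht2⟩ := ltd_offdiag hR he h0
  have m1 : e * (t * e) ∈ peirce11 e := ltd_dec11 hR he t
  have m2 : t - e * (t * e) ∈ peirce22 e := by
    constructor
    · rw [mul_sub, ht1, ltd_eem hR he (t * e), sub_self]
    · rw [sub_mul, (ltd_dec11 hR he t).2]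
      exact sub_eq_zero.mpr ht2
  have hsum : e * (t * e) + (t - e * (t * e)) = t := by abel
  have hcomm : ∀ m ∈ peirce21 e, lieBr (e * (t * e) + (t - e * (t * e))) m = 0 := by
    intro m hm
    rw [hsum]
    have hz1 : (e * (t * e)) * m = 0 := ltd_p11_21 hR m1 hm
    have hz2 : m * (t - e * (t * e)) = 0 := ltd_p21_22 hR hm m2
    have hrw : lieBr t m = (t - e * (t * e)) * m - m * (e * (t * e)) := by
      have a1 : t * m = (e * (t * e)) * m + (t - e * (t * e)) * m := by
        conv_lhs => rw [← hsum]
        rw [add_mul]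
      have a2 : m * t = m * (e * (t * e)) + m * (t - e * (t * e)) := by
        conv_lhs => rw [← hsum]
        rw [mul_add]
      simp only [lieBr]
      rw [a1, a2, hz1, hz2]
      abel
    have hmem : lieBr t m ∈ peirce21 e := by
      rw [hrw]
      exact ltd_p21_sub (ltd_p22_21 hR m2 hm) (ltd_p21_11 hR hm m1)
    have h2 := h1 m hm
    rw [ltd_br21_e hmem] at h2
    exact h2
  have hfin := hii _ _ m1 m2 hcomm
  rwa [hsum] at hfin

/- ------------------- the master identity ------------------- -/

lemma ltd_master {D : R → R} (hD : IsLieTripleDerivable D) (x x' y w : R) :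
    D (lieBr (lieBr (x + x') y) w) - D (lieBr (lieBr x y) w) - D (lieBr (lieBr x' y) w)
      = lieBr (lieBr (D (x + x') - D x - D x') y) w := by
  rw [hD (x + x') y w, hD x y w, hD x' y w]
  simp only [lieBr, mul_add, add_mul, mul_sub, sub_mul]
  abel

lemma ltd_Dzero {D : R → R} (hD : IsLieTripleDerivable D) : D 0 = 0 := by
  have h := hD 0 0 0
  simpa [lieBr] using h

/- ------------------- the key claims ------------------- -/

/-- `D(e + b) - D e - D b` is central for `b ∈ R₁₂`. -/
lemma ltd_Z1 (hR : IsAlternative R) (he : e * e = e) (hii : CondII e)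
    {D : R → R} (hD : IsLieTripleDerivable D) {b : R} (hb : b ∈ peirce12 e) :
    D (e + b) - D e - D b ∈ ringCenter R := by
  have hD0 : D 0 = 0 := ltd_Dzero hD
  apply ltd_endgameII hR he hii
  · -- [[t,e],e] = 0
    have hM := ltd_master hD e b e e
    have c0 : lieBr e e = 0 := by simp [lieBr]
    have c1 : lieBr (lieBr e e) e = 0 := by rw [c0, ltd_br_zero_l]
    have c2 : lieBr (lieBr b e) e = b := by
      rw [ltd_br12_e hb, ltd_br_neg_l, ltd_br12_e hb, neg_neg]
    have c3 : lieBr (lieBr (e + b) e) e = b := by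
      rw [ltd_br_add_l, ltd_br_add_l, c1, c2, zero_add]
    rw [c3, c1, c2, hD0] at hM
    rw [← hM]; abel
  · intro m hm
    have hM := ltd_master hD e b m e
    have c1 : lieBr (lieBr e m) e = -m := by
      have h1 : lieBr e m = -m := by simp only [lieBr]; rw [hm.1, hm.2, zero_sub]
      rw [h1, ltd_br_neg_l, ltd_br21_e hm]
    have c2 : lieBr (lieBr b m) e = 0 := by
      have hx := ltd_p12_21 hR hb hm
      have hy := ltd_p21_12 hR hm hb
      simp only [lieBr, sub_mul, mul_sub, hx.1, hx.2, hy.1, hy.2]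
      abel
    have c3 : lieBr (lieBr (e + b) m) e = -m := by
      rw [ltd_br_add_l, ltd_br_add_l, c1, c2, add_zero]
    rw [c3, c1, c2, hD0] at hM
    rw [← hM]; abel

/-- `D(e + b) - D e - D b` is central for `b ∈ R₂₁`. -/
lemma ltd_Z1' (hR : IsAlternative R) (he : e * e = e) (hi : CondI e)
    {D : R → R} (hD : IsLieTripleDerivable D) {b : R} (hb : b ∈ peirce21 e) :
    D (e + b) - D e - D b ∈ ringCenter R := by
  have hD0 : D 0 = 0 := ltd_Dzero hD
  apply ltd_endgameI hR he hi
  · have hM := ltd_master hD e b e e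
    have c0 : lieBr e e = 0 := by simp [lieBr]
    have c1 : lieBr (lieBr e e) e = 0 := by rw [c0, ltd_br_zero_l]
    have c2 : lieBr (lieBr b e) e = b := by
      rw [ltd_br21_e hb, ltd_br21_e hb]
    have c3 : lieBr (lieBr (e + b) e) e = b := by
      rw [ltd_br_add_l, ltd_br_add_l, c1, c2, zero_add]
    rw [c3, c1, c2, hD0] at hM
    rw [← hM]; abel
  · intro m hm
    have hM := ltd_master hD e b m e
    have c1 : lieBr (lieBr e m) e = -m := by
      have h1 : lieBr e m = m := by simp only [lieBr]; rw [hm.1, hm.2, sub_zero]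
      rw [h1, ltd_br12_e hm]
    have c2 : lieBr (lieBr b m) e = 0 := by
      have hx := ltd_p21_12 hR hb hm
      have hy := ltd_p12_21 hR hm hb
      simp only [lieBr, sub_mul, mul_sub, hx.1, hx.2, hy.1, hy.2]
      abel
    have c3 : lieBr (lieBr (e + b) m) e = -m := by
      rw [ltd_br_add_l, ltd_br_add_l, c1, c2, add_zero]
    rw [c3, c1, c2, hD0] at hM
    rw [← hM]; abel

/-- Exact additivity on `R₁₂ + R₂₁`. -/
lemma ltd_A1 (hR : IsAlternative R) (he : e * e = e) (hi : CondI e)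
    {D : R → R} (hD : IsLieTripleDerivable D) {a b : R}
    (ha : a ∈ peirce12 e) (hb : b ∈ peirce21 e) : D (a + b) = D a + D b := by
  have hz := ltd_Z1' hR he hi hD hb
  have hM := ltd_master hD e b (e - a) e
  have c1 : lieBr (lieBr e (e - a)) e = a := by
    have h1 : lieBr e (e - a) = -a := by
      simp only [lieBr, mul_sub, sub_mul]
      rw [he, ha.1, ha.2]
      abel
    rw [h1, ltd_br_neg_l, ltd_br12_e ha, neg_neg]
  have c2 : lieBr (lieBr b (e - a)) e = b := by
    have hab := ltd_p12_21 hR ha hb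
    have hba := ltd_p21_12 hR hb ha
    have h1 : lieBr b (e - a) = b + (a * b - b * a) := by
      simp only [lieBr, mul_sub, sub_mul]
      rw [hb.1, hb.2]
      abel
    rw [h1]
    simp only [lieBr, add_mul, mul_add, sub_mul, mul_sub,
      hab.1, hab.2, hba.1, hba.2, hb.1, hb.2]
    abel
  have c3 : lieBr (lieBr (e + b) (e - a)) e = a + b := by
    rw [ltd_br_add_l, ltd_br_add_l, c1, c2]
  rw [c3, c1, c2] at hM
  rw [ltd_center_br hz (e - a), ltd_br_zero_l] at hM
  rw [sub_sub, sub_eq_zero] at hM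
  exact hM

/-- Exact additivity on `R₁₂ + R₁₂`. -/
lemma ltd_C12 (hR : IsAlternative R) (he : e * e = e) (hi : CondI e) (hii : CondII e)
    {D : R → R} (hD : IsLieTripleDerivable D) {a b : R}
    (ha : a ∈ peirce12 e) (hb : b ∈ peirce12 e) : D (a + b) = D a + D b := by
  have hz := ltd_Z1 hR he hii hD hb
  have hab := ltd_p12_12 hR ha hb
  have hba := ltd_p12_12 hR hb ha
  have hc : a * b - b * a ∈ peirce21 e := ltd_p21_sub hab hba
  have hM := ltd_master hD e b (e - a) e
  have c1 : lieBr (lieBr e (e - a)) e = a := by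
    have h1 : lieBr e (e - a) = -a := by
      simp only [lieBr, mul_sub, sub_mul]
      rw [he, ha.1, ha.2]
      abel
    rw [h1, ltd_br_neg_l, ltd_br12_e ha, neg_neg]
  have c2 : lieBr (lieBr b (e - a)) e = b + (a * b - b * a) := by
    have h1 : lieBr b (e - a) = (a * b - b * a) - b := by
      simp only [lieBr, mul_sub, sub_mul]
      rw [hb.1, hb.2]
      abel
    rw [h1]
    simp only [lieBr, add_mul, mul_add, sub_mul, mul_sub,
      hab.1, hab.2, hba.1, hba.2, hb.1, hb.2]
    abel
  have c3 : lieBr (lieBr (e + b) (e - a)) e = a + (b + (a * b - b * a)) := by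
    rw [ltd_br_add_l, ltd_br_add_l, c1, c2]
  rw [c3, c1, c2] at hM
  rw [ltd_center_br hz (e - a), ltd_br_zero_l] at hM
  have h4 : D (b + (a * b - b * a)) = D b + D (a * b - b * a) :=
    ltd_A1 hR he hi hD hb hc
  have h5 : D (a + (b + (a * b - b * a))) = D (a + b) + D (a * b - b * a) := by
    rw [show a + (b + (a * b - b * a)) = (a + b) + (a * b - b * a) by abel]
    exact ltd_A1 hR he hi hD (ltd_p12_add ha hb) hc
  have h6 : D (a + b) - (D a + D b) = 0 := by
    calc D (a + b) - (D a + D b)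
        = D (a + (b + (a * b - b * a))) - D a - D (b + (a * b - b * a)) := by
          rw [h5, h4]; abel
      _ = 0 := hM
  exact sub_eq_zero.mp h6

/-- Exact additivity on `R₂₁ + R₂₁`. -/
lemma ltd_C21 (hR : IsAlternative R) (he : e * e = e) (hi : CondI e)
    {D : R → R} (hD : IsLieTripleDerivable D) {a b : R}
    (ha : a ∈ peirce21 e) (hb : b ∈ peirce21 e) : D (a + b) = D a + D b := by
  have hz := ltd_Z1' hR he hi hD hb
  have hab := ltd_p21_21 hR ha hb
  have hba := ltd_p21_21 hR hb ha
  have hc : b * a - a * b ∈ peirce12 e := ltd_p12_sub hba hab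
  have hM := ltd_master hD e b (e - a) e
  have c1 : lieBr (lieBr e (e - a)) e = a := by
    have h1 : lieBr e (e - a) = a := by
      simp only [lieBr, mul_sub, sub_mul]
      rw [he, ha.1, ha.2]
      abel
    rw [h1, ltd_br21_e ha]
  have c2 : lieBr (lieBr b (e - a)) e = b + (b * a - a * b) := by
    have h1 : lieBr b (e - a) = b + (a * b - b * a) := by
      simp only [lieBr, mul_sub, sub_mul]
      rw [hb.1, hb.2]
      abel
    rw [h1]
    simp only [lieBr, add_mul, mul_add, sub_mul, mul_sub,
      hab.1, hab.2, hba.1, hba.2, hb.1, hb.2]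
    abel
  have c3 : lieBr (lieBr (e + b) (e - a)) e = a + (b + (b * a - a * b)) := by
    rw [ltd_br_add_l, ltd_br_add_l, c1, c2]
  rw [c3, c1, c2] at hM
  rw [ltd_center_br hz (e - a), ltd_br_zero_l] at hM
  have h4 : D (b + (b * a - a * b)) = D (b * a - a * b) + D b := by
    rw [add_comm b (b * a - a * b)]
    exact ltd_A1 hR he hi hD hc hb
  have h5 : D (a + (b + (b * a - a * b))) = D (b * a - a * b) + D (a + b) := by
    rw [show a + (b + (b * a - a * b)) = (b * a - a * b) + (a + b) by abel]
    exact ltd_A1 hR he hi hD hc (ltd_p21_add ha hb)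
  have h6 : D (a + b) - (D a + D b) = 0 := by
    calc D (a + b) - (D a + D b)
        = D (a + (b + (b * a - a * b))) - D a - D (b + (b * a - a * b)) := by
          rw [h5, h4]; abel
      _ = 0 := hM
  exact sub_eq_zero.mp h6

/- ------------------- component bracket computations ------------------- -/

lemma ltd_c11 (hR : IsAlternative R) {x m : R}
    (hx : x ∈ peirce11 e) (hm : m ∈ peirce12 e) :
    lieBr (lieBr x m) e = -(x * m) := by
  have h0 : m * x = 0 := ltd_p12_11 hR hm hx
  have h1 : x * m ∈ peirce12 e := ltd_p11_12 hR hx hm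
  have h2 : lieBr x m = x * m := by simp only [lieBr, h0, sub_zero]
  rw [h2, ltd_br12_e h1]

lemma ltd_c12 (hR : IsAlternative R) {x m : R}
    (hx : x ∈ peirce12 e) (hm : m ∈ peirce12 e) :
    lieBr (lieBr x m) e = x * m - m * x := by
  have h1 := ltd_p12_12 hR hx hm
  have h2 := ltd_p12_12 hR hm hx
  have h3 : lieBr x m = x * m - m * x := rfl
  rw [h3, ltd_br21_e (ltd_p21_sub h1 h2)]

lemma ltd_c21 (hR : IsAlternative R) {x m : R}
    (hx : x ∈ peirce21 e) (hm : m ∈ peirce12 e) :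
    lieBr (lieBr x m) e = 0 := by
  have h1 := ltd_p21_12 hR hx hm
  have h2 := ltd_p12_21 hR hm hx
  simp only [lieBr, sub_mul, mul_sub, h1.1, h1.2, h2.1, h2.2]
  abel

lemma ltd_c22 (hR : IsAlternative R) {x m : R}
    (hx : x ∈ peirce22 e) (hm : m ∈ peirce12 e) :
    lieBr (lieBr x m) e = m * x := by
  have h0 : x * m = 0 := ltd_p22_12 hR hx hm
  have h1 : m * x ∈ peirce12 e := ltd_p12_22 hR hm hx
  have h2 : lieBr x m = -(m * x) := by simp only [lieBr, h0, zero_sub]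
  rw [h2, ltd_br_neg_l, ltd_br12_e h1, neg_neg]

lemma ltd_brbr_m_core (hR : IsAlternative R) {m x1 x2 x3 x4 : R}
    (h1 : x1 ∈ peirce11 e) (h2 : x2 ∈ peirce12 e) (h3 : x3 ∈ peirce21 e)
    (h4 : x4 ∈ peirce22 e) (hm : m ∈ peirce12 e) :
    lieBr (lieBr (x1 + x2 + x3 + x4) m) e = (m * x4 - x1 * m) + (x2 * m - m * x2) := by
  simp only [ltd_br_add_l]
  rw [ltd_c11 hR h1 hm, ltd_c12 hR h2 hm, ltd_c21 hR h3 hm, ltd_c22 hR h4 hm]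
  abel

lemma ltd_brbr_m (hR : IsAlternative R) (he : e * e = e) {m : R}
    (hm : m ∈ peirce12 e) (x : R) :
    lieBr (lieBr x m) e
      = (m * (x - e * x - x * e + e * (x * e)) - (e * (x * e)) * m)
        + ((e * x - e * (x * e)) * m - m * (e * x - e * (x * e))) := by
  have h11 := ltd_dec11 hR he x
  have h12 := ltd_dec12 hR he x
  have h21 := ltd_dec21 hR he x
  have h22 := ltd_dec22 hR he x
  have hdec : x = e * (x * e) + (e * x - e * (x * e)) + (x * e - e * (x * e))
      + (x - e * x - x * e + e * (x * e)) := by abel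
  conv_lhs => rw [hdec]
  exact ltd_brbr_m_core hR h11 h12 h21 h22 hm

end LTDAux

theorem lieTripleDer_almost_additive
    {R : Type*} [NonUnitalNonAssocRing R] (hR : IsAlternative R)
    (e : R) (he : IsNontrivialIdempotent e) (hi : CondI e) (hii : CondII e)
    (D : R → R) (hD : IsLieTripleDerivable D) :
    ∀ a b : R, ∃ z ∈ ringCenter R, D (a + b) = D a + D b + z := by
  intro a b
  have he1 : e * e = e := he.1
  refine ⟨D (a + b) - D a - D b, ?_, by abel⟩
  apply ltd_endgameI hR he1 hi
  · -- [[t, e], e] = 0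
    have hM := ltd_master hD a b e e
    have cab : lieBr (lieBr (a + b) e) e
        = ((e * a - e * (a * e)) + (e * b - e * (b * e)))
          + ((a * e - e * (a * e)) + (b * e - e * (b * e))) := by
      rw [ltd_br_br_e hR he1 (a + b)]
      simp only [mul_add, add_mul]
      abel
    rw [cab, ltd_br_br_e hR he1 a, ltd_br_br_e hR he1 b] at hM
    have hPa := ltd_dec12 hR he1 a
    have hPb := ltd_dec12 hR he1 b
    have hQa := ltd_dec21 hR he1 a
    have hQb := ltd_dec21 hR he1 b
    rw [ltd_A1 hR he1 hi hD (ltd_p12_add hPa hPb) (ltd_p21_add hQa hQb),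
        ltd_C12 hR he1 hi hii hD hPa hPb,
        ltd_C21 hR he1 hi hD hQa hQb,
        ltd_A1 hR he1 hi hD hPa hQa,
        ltd_A1 hR he1 hi hD hPb hQb] at hM
    rw [← hM]
    abel
  · -- [[t, m], e] = 0 for every m ∈ R₁₂
    intro m hm
    have hM := ltd_master hD a b m e
    have cab : lieBr (lieBr (a + b) m) e
        = ((m * (a - e * a - a * e + e * (a * e)) - (e * (a * e)) * m)
            + (m * (b - e * b - b * e + e * (b * e)) - (e * (b * e)) * m))
          + (((e * a - e * (a * e)) * m - m * (e * a - e * (a * e)))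
            + ((e * b - e * (b * e)) * m - m * (e * b - e * (b * e)))) := by
      rw [ltd_brbr_m hR he1 hm (a + b)]
      simp only [mul_add, add_mul, mul_sub, sub_mul]
      abel
    rw [cab, ltd_brbr_m hR he1 hm a, ltd_brbr_m hR he1 hm b] at hM
    have hPa : m * (a - e * a - a * e + e * (a * e)) - (e * (a * e)) * m ∈ peirce12 e :=
      ltd_p12_sub (ltd_p12_22 hR hm (ltd_dec22 hR he1 a)) (ltd_p11_12 hR (ltd_dec11 hR he1 a) hm)
    have hPb : m * (b - e * b - b * e + e * (b * e)) - (e * (b * e)) * m ∈ peirce12 e :=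
      ltd_p12_sub (ltd_p12_22 hR hm (ltd_dec22 hR he1 b)) (ltd_p11_12 hR (ltd_dec11 hR he1 b) hm)
    have hQa : (e * a - e * (a * e)) * m - m * (e * a - e * (a * e)) ∈ peirce21 e :=
      ltd_p21_sub (ltd_p12_12 hR (ltd_dec12 hR he1 a) hm) (ltd_p12_12 hR hm (ltd_dec12 hR he1 a))
    have hQb : (e * b - e * (b * e)) * m - m * (e * b - e * (b * e)) ∈ peirce21 e :=
      ltd_p21_sub (ltd_p12_12 hR (ltd_dec12 hR he1 b) hm) (ltd_p12_12 hR hm (ltd_dec12 hR he1 b))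
    rw [ltd_A1 hR he1 hi hD (ltd_p12_add hPa hPb) (ltd_p21_add hQa hQb),
        ltd_C12 hR he1 hi hii hD hPa hPb,
        ltd_C21 hR he1 hi hD hQa hQb,
        ltd_A1 hR he1 hi hD hPa hQa,
        ltd_A1 hR he1 hi hD hPb hQb] at hM
    rw [← hM]
    abel
end

section
/- Let R be an alternative ring containing a nontrivial idempotent e₁ satisfying conditions (i) and (ii). Then every Lie derivable map D : R → R is almost additive: for all a, b ∈ R there exists z ∈ Z(R) (depending on a and b) such that D(a + b) = D(a) + D(b) + z. -/
namespace AlmostAddProof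

variable {R : Type*} [NonUnitalNonAssocRing R]

/-- associator -/
private def asc (x y z : R) : R := x * y * z - x * (y * z)

private lemma lieBr_add_left (a b x : R) : lieBr (a + b) x = lieBr a x + lieBr b x := by
  simp only [lieBr, add_mul, mul_add]; abel

private lemma lieBr_add3_left (a b c x : R) :
    lieBr (a + b + c) x = lieBr a x + lieBr b x + lieBr c x := by
  simp only [lieBr, add_mul, mul_add]; abel

private lemma lieBr_add_add (a b c d : R) :
    lieBr (a + b) (c + d) = lieBr a c + lieBr a d + lieBr b c + lieBr b d := by
  simp only [lieBr, add_mul, mul_add]; abel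

private lemma asc12 (hR : IsAlternative R) (x y z : R) : asc x y z = - asc y x z := by
  have h := hR.1 (x + y) z
  have hx := hR.1 x z
  have hy := hR.1 y z
  have expand : (x+y)*(x+y)*z - (x+y)*((x+y)*z)
      = (x*x*z - x*(x*z)) + (y*y*z - y*(y*z)) + (asc x y z + asc y x z) := by
    simp only [asc, add_mul, mul_add]; abel
  rw [h, hx, hy] at expand
  simp only [sub_self, zero_add, add_zero] at expand
  exact eq_neg_of_add_eq_zero_left expand.symm

private lemma asc23 (hR : IsAlternative R) (x y z : R) : asc x y z = - asc x z y := by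
  have h := hR.2 (y + z) x
  have hy := hR.2 y x
  have hz := hR.2 z x
  have expand : x*(y+z)*(y+z) - x*((y+z)*(y+z))
      = (x*y*y - x*(y*y)) + (x*z*z - x*(z*z)) + (asc x y z + asc x z y) := by
    simp only [asc, add_mul, mul_add]; abel
  rw [h, hy, hz] at expand
  simp only [sub_self, zero_add, add_zero] at expand
  exact eq_neg_of_add_eq_zero_left expand.symm

private lemma asc13 (hR : IsAlternative R) (x y z : R) : asc x y z = - asc z y x := by
  rw [asc12 hR, asc23 hR y x z, asc12 hR y z x]
  simp

private lemma flexeq (hR : IsAlternative R) (x y : R) : x*y*x = x*(y*x) := by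
  have h := asc12 hR x y x
  have h2 : asc y x x = 0 := by
    show y*x*x - y*(x*x) = 0
    rw [hR.2 x y, sub_self]
  rw [h2, neg_zero] at h
  have h3 : x*y*x - x*(y*x) = 0 := h
  exact sub_eq_zero.mp h3


variable {R : Type*} [NonUnitalNonAssocRing R]

-- Products of Peirce components. M = R₁₂ (e*m = m, m*e = 0); W = R₂₁ (e*w = 0, w*e = w)
-- 11 : e*t = t, t*e = t ;  22 : e*s = 0, s*e = 0.

private lemma pMM (hR : IsAlternative R) {e u v : R} (hu1 : e*u = u) (hu2 : u*e = 0)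
    (hv1 : e*v = v) (hv2 : v*e = 0) : e*(u*v) = 0 ∧ (u*v)*e = u*v := by
  have hA : asc u e v = -(u*v) := by
    show u*e*v - u*(e*v) = -(u*v)
    rw [hu2, hv1, zero_mul, zero_sub]
  constructor
  · have h := asc12 hR e u v
    rw [hA, neg_neg] at h
    have h' : e*u*v - e*(u*v) = u*v := h
    rw [hu1] at h'
    exact sub_eq_self.mp h'
  · have h := asc23 hR u v e
    rw [hA, neg_neg] at h
    have h' : u*v*e - u*(v*e) = u*v := h
    rw [hv2, mul_zero, sub_zero] at h'
    exact h'

private lemma pWW (hR : IsAlternative R) {e w w' : R} (hw1 : e*w = 0) (hw2 : w*e = w)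
    (hw1' : e*w' = 0) (hw2' : w'*e = w') : e*(w*w') = w*w' ∧ (w*w')*e = 0 := by
  have hA : asc w e w' = w*w' := by
    show w*e*w' - w*(e*w') = w*w'
    rw [hw2, hw1', mul_zero, sub_zero]
  constructor
  · have h := asc12 hR e w w'
    rw [hA] at h
    have h' : e*w*w' - e*(w*w') = -(w*w') := h
    rw [hw1, zero_mul, zero_sub, neg_inj] at h'
    exact h'
  · have h := asc23 hR w w' e
    rw [hA] at h
    have h' : w*w'*e - w*(w'*e) = -(w*w') := h
    rw [hw2'] at h'
    have := sub_eq_iff_eq_add.mp h'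
    rw [this, neg_add_cancel]

private lemma pMW (hR : IsAlternative R) {e u w : R} (hu1 : e*u = u) (hu2 : u*e = 0)
    (hw1 : e*w = 0) (hw2 : w*e = w) : e*(u*w) = u*w ∧ (u*w)*e = u*w := by
  have hA : asc u e w = 0 := by
    show u*e*w - u*(e*w) = 0
    rw [hu2, hw1, zero_mul, mul_zero, sub_zero]
  constructor
  · have h := asc12 hR e u w
    rw [hA, neg_zero] at h
    have h' : e*u*w - e*(u*w) = 0 := h
    rw [hu1] at h'
    exact (sub_eq_zero.mp h').symm
  · have h := asc23 hR u w e
    rw [hA, neg_zero] at h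
    have h' : u*w*e - u*(w*e) = 0 := h
    rw [hw2] at h'
    exact sub_eq_zero.mp h'

private lemma pWM (hR : IsAlternative R) {e u w : R} (hw1 : e*w = 0) (hw2 : w*e = w)
    (hu1 : e*u = u) (hu2 : u*e = 0) : e*(w*u) = 0 ∧ (w*u)*e = 0 := by
  have hA : asc w e u = 0 := by
    show w*e*u - w*(e*u) = 0
    rw [hw2, hu1, sub_self]
  constructor
  · have h := asc12 hR e w u
    rw [hA, neg_zero] at h
    have h' : e*w*u - e*(w*u) = 0 := h
    rw [hw1, zero_mul, zero_sub, neg_eq_zero] at h'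
    exact h'
  · have h := asc23 hR w u e
    rw [hA, neg_zero] at h
    have h' : w*u*e - w*(u*e) = 0 := h
    rw [hu2, mul_zero, sub_zero] at h'
    exact h'

private lemma p11M (hR : IsAlternative R) {e t u : R} (ht1 : e*t = t) (ht2 : t*e = t)
    (hu1 : e*u = u) (hu2 : u*e = 0) : e*(t*u) = t*u ∧ (t*u)*e = 0 := by
  have hA : asc t e u = 0 := by
    show t*e*u - t*(e*u) = 0
    rw [ht2, hu1, sub_self]
  constructor
  · have h := asc12 hR e t u
    rw [hA, neg_zero] at h
    have h' : e*t*u - e*(t*u) = 0 := h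
    rw [ht1] at h'
    exact (sub_eq_zero.mp h').symm
  · have h := asc23 hR t u e
    rw [hA, neg_zero] at h
    have h' : t*u*e - t*(u*e) = 0 := h
    rw [hu2, mul_zero, sub_zero] at h'
    exact h'

private lemma pM22 (hR : IsAlternative R) {e u s : R} (hu1 : e*u = u) (hu2 : u*e = 0)
    (hs1 : e*s = 0) (hs2 : s*e = 0) : e*(u*s) = u*s ∧ (u*s)*e = 0 := by
  have hA : asc u e s = 0 := by
    show u*e*s - u*(e*s) = 0
    rw [hu2, hs1, zero_mul, mul_zero, sub_zero]
  constructor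
  · have h := asc12 hR e u s
    rw [hA, neg_zero] at h
    have h' : e*u*s - e*(u*s) = 0 := h
    rw [hu1] at h'
    exact (sub_eq_zero.mp h').symm
  · have h := asc23 hR u s e
    rw [hA, neg_zero] at h
    have h' : u*s*e - u*(s*e) = 0 := h
    rw [hs2, mul_zero, sub_zero] at h'
    exact h'

private lemma pM11 (hR : IsAlternative R) {e t u : R} (hu1 : e*u = u) (hu2 : u*e = 0)
    (ht1 : e*t = t) (ht2 : t*e = t) : u*t = 0 := by
  have hB : asc t e u = 0 := by
    show t*e*u - t*(e*u) = 0
    rw [ht2, hu1, sub_self]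
  have h := asc13 hR u e t
  rw [hB, neg_zero] at h
  have h' : u*e*t - u*(e*t) = 0 := h
  rw [hu2, zero_mul, ht1, zero_sub, neg_eq_zero] at h'
  exact h'

private lemma p22M (hR : IsAlternative R) {e s u : R} (hs1 : e*s = 0) (hs2 : s*e = 0)
    (hu1 : e*u = u) (hu2 : u*e = 0) : s*u = 0 := by
  have hB : asc u e s = 0 := by
    show u*e*s - u*(e*s) = 0
    rw [hu2, hs1, zero_mul, mul_zero, sub_zero]
  have h := asc13 hR s e u
  rw [hB, neg_zero] at h
  have h' : s*e*u - s*(e*u) = 0 := h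
  rw [hs2, zero_mul, hu1, zero_sub, neg_eq_zero] at h'
  exact h'

private lemma p11W (hR : IsAlternative R) {e t w : R} (ht1 : e*t = t) (ht2 : t*e = t)
    (hw1 : e*w = 0) (hw2 : w*e = w) : t*w = 0 := by
  have hB : asc w e t = 0 := by
    show w*e*t - w*(e*t) = 0
    rw [hw2, ht1, sub_self]
  have h := asc13 hR t e w
  rw [hB, neg_zero] at h
  have h' : t*e*w - t*(e*w) = 0 := h
  rw [ht2, hw1, mul_zero, sub_zero] at h'
  exact h'

private lemma pW11 (hR : IsAlternative R) {e t w : R} (hw1 : e*w = 0) (hw2 : w*e = w)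
    (ht1 : e*t = t) (ht2 : t*e = t) : e*(w*t) = 0 ∧ (w*t)*e = w*t := by
  have hA : asc w e t = 0 := by
    show w*e*t - w*(e*t) = 0
    rw [hw2, ht1, sub_self]
  constructor
  · have h := asc12 hR e w t
    rw [hA, neg_zero] at h
    have h' : e*w*t - e*(w*t) = 0 := h
    rw [hw1, zero_mul, zero_sub, neg_eq_zero] at h'
    exact h'
  · have h := asc23 hR w t e
    rw [hA, neg_zero] at h
    have h' : w*t*e - w*(t*e) = 0 := h
    rw [ht2] at h'
    exact sub_eq_zero.mp h'

private lemma p22W (hR : IsAlternative R) {e s w : R} (hs1 : e*s = 0) (hs2 : s*e = 0)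
    (hw1 : e*w = 0) (hw2 : w*e = w) : e*(s*w) = 0 ∧ (s*w)*e = s*w := by
  have hA : asc s e w = 0 := by
    show s*e*w - s*(e*w) = 0
    rw [hs2, hw1, zero_mul, mul_zero, sub_zero]
  constructor
  · have h := asc12 hR e s w
    rw [hA, neg_zero] at h
    have h' : e*s*w - e*(s*w) = 0 := h
    rw [hs1, zero_mul, zero_sub, neg_eq_zero] at h'
    exact h'
  · have h := asc23 hR s w e
    rw [hA, neg_zero] at h
    have h' : s*w*e - s*(w*e) = 0 := h
    rw [hw2] at h'
    exact sub_eq_zero.mp h'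

private lemma pW22 (hR : IsAlternative R) {e s w : R} (hw1 : e*w = 0) (hw2 : w*e = w)
    (hs1 : e*s = 0) (hs2 : s*e = 0) : w*s = 0 := by
  have hB : asc s e w = 0 := by
    show s*e*w - s*(e*w) = 0
    rw [hs2, hw1, zero_mul, mul_zero, sub_zero]
  have h := asc13 hR w e s
  rw [hB, neg_zero] at h
  have h' : w*e*s - w*(e*s) = 0 := h
  rw [hw2, hs1, mul_zero, sub_zero] at h'
  exact h'


variable {R : Type*} [NonUnitalNonAssocRing R]

-- diag t means e*t = t*e.  Decomposition of a diagonal element.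
private lemma diag_dec (hR : IsAlternative R) {e t : R} (he : e*e = e) (ht : e*t = t*e) :
    e*(e*t) = e*t ∧ (e*t)*e = e*t ∧ e*(t - e*t) = 0 ∧ (t - e*t)*e = 0 := by
  have h1 : e*(e*t) = e*t := by rw [← hR.1 e t, he]
  have h2 : (e*t)*e = e*t := by
    rw [flexeq hR e t, ← ht, h1]
  refine ⟨h1, h2, ?_, ?_⟩
  · rw [mul_sub, h1, sub_self]
  · rw [sub_mul, h2, ht, sub_self]

private lemma W_diag_zero {e x : R} (h1 : e*x = 0) (h2 : x*e = x) (h3 : lieBr x e = 0) :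
    x = 0 := by
  have h : x*e - e*x = 0 := h3
  rw [h2, h1, sub_zero] at h
  exact h

private lemma M_diag_zero {e x : R} (h1 : e*x = x) (h2 : x*e = 0) (h3 : lieBr x e = 0) :
    x = 0 := by
  have h : x*e - e*x = 0 := h3
  rw [h2, h1, zero_sub, neg_eq_zero] at h
  exact h

-- bracket of a diagonal element with an M-element lands in M
private lemma brDiagM (hR : IsAlternative R) {e d m : R} (he : e*e = e) (hd : e*d = d*e)
    (hm1 : e*m = m) (hm2 : m*e = 0) :
    e*(lieBr d m) = lieBr d m ∧ (lieBr d m)*e = 0 := by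
  obtain ⟨h1, h2, h3, h4⟩ := diag_dec hR he hd
  have hA := p11M hR h1 h2 hm1 hm2
  have hB := pM22 hR hm1 hm2 h3 h4
  have hzero1 : (d - e*d)*m = 0 := p22M hR h3 h4 hm1 hm2
  have hzero2 : m*(e*d) = 0 := pM11 hR hm1 hm2 h1 h2
  have hdm : d*m = (e*d)*m := by
    rw [sub_mul] at hzero1
    exact (sub_eq_zero.mp hzero1).symm.symm ▸ (sub_eq_zero.mp hzero1).symm
  have hmd : m*d = m*(d - e*d) := by
    have h5 : m*(d - e*d) = m*d - m*(e*d) := mul_sub m d (e*d)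
    rw [hzero2, sub_zero] at h5
    exact h5.symm
  have hval : lieBr d m = (e*d)*m - m*(d - e*d) := by
    show d*m - m*d = _
    rw [hdm, hmd]
  constructor
  · rw [hval, mul_sub, hA.1, hB.1]
  · rw [hval, sub_mul, hA.2, hB.2, sub_self]

-- bracket of a diagonal element with a W-element lands in W
private lemma brDiagW (hR : IsAlternative R) {e d w : R} (he : e*e = e) (hd : e*d = d*e)
    (hw1 : e*w = 0) (hw2 : w*e = w) :
    e*(lieBr d w) = 0 ∧ (lieBr d w)*e = lieBr d w := by
  obtain ⟨h1, h2, h3, h4⟩ := diag_dec hR he hd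
  have hA := p22W hR h3 h4 hw1 hw2
  have hB := pW11 hR hw1 hw2 h1 h2
  have hzero1 : (e*d)*w = 0 := p11W hR h1 h2 hw1 hw2
  have hzero2 : w*(d - e*d) = 0 := pW22 hR hw1 hw2 h3 h4
  have hdw : d*w = (d - e*d)*w := by
    have h5 : (d - e*d)*w = d*w - (e*d)*w := sub_mul d (e*d) w
    rw [hzero1, sub_zero] at h5
    exact h5.symm
  have hwd : w*d = w*(e*d) := by
    rw [mul_sub] at hzero2
    exact (sub_eq_zero.mp hzero2)
  have hval : lieBr d w = (d - e*d)*w - w*(e*d) := by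
    show d*w - w*d = _
    rw [hdw, hwd]
  constructor
  · rw [hval, mul_sub, hA.1, hB.1, sub_self]
  · rw [hval, sub_mul, hA.2, hB.2]

-- bracket of M and W elements is diagonal
private lemma brMW_diag (hR : IsAlternative R) {e m w : R} (hm1 : e*m = m) (hm2 : m*e = 0)
    (hw1 : e*w = 0) (hw2 : w*e = w) : e*(lieBr m w) = (lieBr m w)*e := by
  have hA := pMW hR hm1 hm2 hw1 hw2
  have hB := pWM hR hw1 hw2 hm1 hm2
  show e*(m*w - w*m) = (m*w - w*m)*e
  rw [mul_sub, sub_mul, hA.1, hA.2, hB.1, hB.2]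

private lemma brWM_diag (hR : IsAlternative R) {e m w : R} (hw1 : e*w = 0) (hw2 : w*e = w)
    (hm1 : e*m = m) (hm2 : m*e = 0) : e*(lieBr w m) = (lieBr w m)*e := by
  have hA := pMW hR hm1 hm2 hw1 hw2
  have hB := pWM hR hw1 hw2 hm1 hm2
  show e*(w*m - m*w) = (w*m - m*w)*e
  rw [mul_sub, sub_mul, hA.1, hA.2, hB.1, hB.2]

-- bracket of two M-elements lands in W
private lemma brMM_W (hR : IsAlternative R) {e u v : R} (hu1 : e*u = u) (hu2 : u*e = 0)
    (hv1 : e*v = v) (hv2 : v*e = 0) :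
    e*(lieBr u v) = 0 ∧ (lieBr u v)*e = lieBr u v := by
  have hA := pMM hR hu1 hu2 hv1 hv2
  have hB := pMM hR hv1 hv2 hu1 hu2
  constructor
  · show e*(u*v - v*u) = 0
    rw [mul_sub, hA.1, hB.1, sub_self]
  · show (u*v - v*u)*e = u*v - v*u
    rw [sub_mul, hA.2, hB.2]

private lemma brWW_M (hR : IsAlternative R) {e w w' : R} (hw1 : e*w = 0) (hw2 : w*e = w)
    (hw1' : e*w' = 0) (hw2' : w'*e = w') :
    e*(lieBr w w') = lieBr w w' ∧ (lieBr w w')*e = 0 := by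
  have hA := pWW hR hw1 hw2 hw1' hw2'
  have hB := pWW hR hw1' hw2' hw1 hw2
  constructor
  · show e*(w*w' - w'*w) = w*w' - w'*w
    rw [mul_sub, hA.1, hB.1]
  · show (w*w' - w'*w)*e = 0
    rw [sub_mul, hA.2, hB.2, sub_self]

-- center lemmas
private lemma center_add {a b : R} (ha : a ∈ ringCenter R) (hb : b ∈ ringCenter R) :
    a + b ∈ ringCenter R := by
  obtain ⟨a1, a2, a3, a4⟩ := ha
  obtain ⟨b1, b2, b3, b4⟩ := hb
  refine ⟨fun x y => ?_, fun x y => ?_, fun x y => ?_, fun x => ?_⟩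
  · simp only [add_mul, a1, b1, mul_add]
  · simp only [mul_add, add_mul, a2 x y, b2 x y]
  · simp only [mul_add, add_mul, a3 x y, b3 x y]
  · simp only [add_mul, mul_add, a4 x, b4 x]

private lemma center_neg {a : R} (ha : a ∈ ringCenter R) : -a ∈ ringCenter R := by
  obtain ⟨a1, a2, a3, a4⟩ := ha
  refine ⟨fun x y => ?_, fun x y => ?_, fun x y => ?_, fun x => ?_⟩
  · simp only [neg_mul, mul_neg, a1 x y]
  · simp only [neg_mul, mul_neg, a2 x y]
  · simp only [neg_mul, mul_neg, a3 x y]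
  · simp only [neg_mul, mul_neg, a4 x]

private lemma center_sub {a b : R} (ha : a ∈ ringCenter R) (hb : b ∈ ringCenter R) :
    a - b ∈ ringCenter R := by
  rw [sub_eq_add_neg]
  exact center_add ha (center_neg hb)

-- condition applications
private lemma centW (hR : IsAlternative R) {e t : R} (he : e*e = e) (hii : CondII e)
    (ht : e*t = t*e) (hw : ∀ w : R, e*w = 0 → w*e = w → lieBr t w = 0) :
    t ∈ ringCenter R := by
  obtain ⟨h1, h2, h3, h4⟩ := diag_dec hR he ht
  have heq : e*t + (t - e*t) = t := by abel
  have key := hii (e*t) (t - e*t) ⟨h1, h2⟩ ⟨h3, h4⟩ ?_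
  · rwa [heq] at key
  · intro w hwm
    rw [heq]
    exact hw w hwm.1 hwm.2

private lemma centM (hR : IsAlternative R) {e t : R} (he : e*e = e) (hi : CondI e)
    (ht : e*t = t*e) (hm : ∀ m : R, e*m = m → m*e = 0 → lieBr t m = 0) :
    t ∈ ringCenter R := by
  obtain ⟨h1, h2, h3, h4⟩ := diag_dec hR he ht
  have heq : e*t + (t - e*t) = t := by abel
  have key := hi (e*t) (t - e*t) ⟨h1, h2⟩ ⟨h3, h4⟩ ?_
  · rwa [heq] at key
  · intro m hmm
    rw [heq]
    exact hm m hmm.1 hmm.2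

-- D machinery
private lemma Dzero {D : R → R} (hD : IsLieDerivable D) : D 0 = 0 := by
  have h := hD 0 0
  have h0 : lieBr (0:R) (0:R) = 0 := by simp [lieBr]
  rw [h0] at h
  simpa [lieBr] using h

private lemma fact1 {D : R → R} (hD : IsLieDerivable D) (a b x : R) :
    lieBr (D (a + b) - D a - D b) x
      = D (lieBr a x + lieBr b x) - D (lieBr a x) - D (lieBr b x) := by
  have h1 := hD (a + b) x
  have h2 := hD a x
  have h3 := hD b x
  rw [lieBr_add_left a b x] at h1
  rw [h1, h2, h3]
  simp only [lieBr, sub_mul, mul_sub, add_mul, mul_add]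
  abel

private lemma master2 {D : R → R} (hD : IsLieDerivable D) {z z' : R}
    (hz : z ∈ ringCenter R) (hz' : z' ∈ ringCenter R) {x1 x2 y1 y2 : R}
    (hX : D (x1 + x2) = D x1 + D x2 + z) (hY : D (y1 + y2) = D y1 + D y2 + z') :
    D (lieBr (x1 + x2) (y1 + y2))
      = D (lieBr x1 y1) + D (lieBr x1 y2) + D (lieBr x2 y1) + D (lieBr x2 y2) := by
  have h := hD (x1 + x2) (y1 + y2)
  rw [hX, hY] at h
  rw [h, hD x1 y1, hD x1 y2, hD x2 y1, hD x2 y2]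
  have cz1 := hz.2.2.2 y1
  have cz2 := hz.2.2.2 y2
  have cz1' := hz'.2.2.2 x1
  have cz2' := hz'.2.2.2 x2
  simp only [lieBr, add_mul, mul_add]
  rw [cz1, cz2, cz1', cz2']
  abel

private lemma master31 {D : R → R} (hD : IsLieDerivable D) {x1 x2 x3 y : R}
    (hX : D (x1 + x2 + x3) = D x1 + D x2 + D x3) :
    D (lieBr (x1 + x2 + x3) y) = D (lieBr x1 y) + D (lieBr x2 y) + D (lieBr x3 y) := by
  have h := hD (x1 + x2 + x3) y
  rw [hX] at h
  rw [h, hD x1 y, hD x2 y, hD x3 y]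
  simp only [lieBr, add_mul, mul_add]
  abel


variable {R : Type*} [NonUnitalNonAssocRing R]

/-- Claim 1: for diagonal `d` and `m ∈ R₁₂`, `D(d+m) - D d - D m` is central.
Uses condition (ii). -/
private lemma claim1 (hR : IsAlternative R) {e : R} (he : e*e = e) {D : R → R}
    (hD : IsLieDerivable D) (hii : CondII e) {d m : R} (hd : e*d = d*e)
    (hm1 : e*m = m) (hm2 : m*e = 0) :
    ∃ z ∈ ringCenter R, D (d + m) = D d + D m + z := by
  have hD0 : D 0 = 0 := Dzero hD
  have hbr_d_e : lieBr d e = 0 := by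
    show d*e - e*d = 0
    rw [hd, sub_self]
  have hbr_m_e : lieBr m e = -m := by
    show m*e - e*m = -m
    rw [hm1, hm2, zero_sub]
  -- s is diagonal
  have hdiag : lieBr (D (d + m) - D d - D m) e = 0 := by
    have h := fact1 hD d m e
    rw [hbr_d_e, hbr_m_e, zero_add, hD0] at h
    rw [h]
    abel
  have hsd : e*(D (d + m) - D d - D m) = (D (d + m) - D d - D m)*e := by
    have h : (D (d + m) - D d - D m)*e - e*(D (d + m) - D d - D m) = 0 := hdiag
    exact (sub_eq_zero.mp h).symm
  -- s commutes with W
  have hcomm : ∀ w : R, e*w = 0 → w*e = w → lieBr (D (d + m) - D d - D m) w = 0 := by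
    intro w hw1 hw2
    have hmemW := brDiagW hR he hsd hw1 hw2
    have hval := fact1 hD d m w
    have hAW := brDiagW hR he hd hw1 hw2
    have hBd := brMW_diag hR hm1 hm2 hw1 hw2
    have hVdiag : lieBr (D (lieBr d w + lieBr m w) - D (lieBr d w) - D (lieBr m w)) e
        = 0 := by
      have h2 := fact1 hD (lieBr d w) (lieBr m w) e
      have hbrA : lieBr (lieBr d w) e = lieBr d w := by
        show (lieBr d w)*e - e*(lieBr d w) = lieBr d w
        rw [hAW.2, hAW.1, sub_zero]
      have hbrB : lieBr (lieBr m w) e = 0 := by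
        show (lieBr m w)*e - e*(lieBr m w) = 0
        rw [← hBd, sub_self]
      rw [hbrA, hbrB, add_zero, hD0] at h2
      rw [h2]
      abel
    rw [← hval] at hVdiag
    exact W_diag_zero hmemW.1 hmemW.2 hVdiag
  have hcent : (D (d + m) - D d - D m) ∈ ringCenter R := centW hR he hii hsd hcomm
  exact ⟨D (d + m) - D d - D m, hcent, by abel⟩

/-- Claim 1': for diagonal `d` and `w ∈ R₂₁`, `D(d+w) - D d - D w` is central.
Uses condition (i). -/
private lemma claim1' (hR : IsAlternative R) {e : R} (he : e*e = e) {D : R → R}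
    (hD : IsLieDerivable D) (hi : CondI e) {d w : R} (hd : e*d = d*e)
    (hw1 : e*w = 0) (hw2 : w*e = w) :
    ∃ z ∈ ringCenter R, D (d + w) = D d + D w + z := by
  have hD0 : D 0 = 0 := Dzero hD
  have hbr_d_e : lieBr d e = 0 := by
    show d*e - e*d = 0
    rw [hd, sub_self]
  have hbr_w_e : lieBr w e = w := by
    show w*e - e*w = w
    rw [hw1, hw2, sub_zero]
  have hdiag : lieBr (D (d + w) - D d - D w) e = 0 := by
    have h := fact1 hD d w e
    rw [hbr_d_e, hbr_w_e, zero_add, hD0] at h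
    rw [h]
    abel
  have hsd : e*(D (d + w) - D d - D w) = (D (d + w) - D d - D w)*e := by
    have h : (D (d + w) - D d - D w)*e - e*(D (d + w) - D d - D w) = 0 := hdiag
    exact (sub_eq_zero.mp h).symm
  have hcomm : ∀ m : R, e*m = m → m*e = 0 → lieBr (D (d + w) - D d - D w) m = 0 := by
    intro m hm1 hm2
    have hmemM := brDiagM hR he hsd hm1 hm2
    have hval := fact1 hD d w m
    have hAM := brDiagM hR he hd hm1 hm2
    have hBd := brWM_diag hR hw1 hw2 hm1 hm2
    have hVdiag : lieBr (D (lieBr d m + lieBr w m) - D (lieBr d m) - D (lieBr w m)) e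
        = 0 := by
      have h2 := fact1 hD (lieBr d m) (lieBr w m) e
      have hbrA : lieBr (lieBr d m) e = -(lieBr d m) := by
        show (lieBr d m)*e - e*(lieBr d m) = -(lieBr d m)
        rw [hAM.2, hAM.1, zero_sub]
      have hbrB : lieBr (lieBr w m) e = 0 := by
        show (lieBr w m)*e - e*(lieBr w m) = 0
        rw [← hBd, sub_self]
      rw [hbrA, hbrB, add_zero, hD0] at h2
      rw [h2]
      abel
    rw [← hval] at hVdiag
    exact M_diag_zero hmemM.1 hmemM.2 hVdiag
  have hcent : (D (d + w) - D d - D w) ∈ ringCenter R := centM hR he hi hsd hcomm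
  exact ⟨D (d + w) - D d - D w, hcent, by abel⟩


variable {R : Type*} [NonUnitalNonAssocRing R]

private lemma claim2aux (hR : IsAlternative R) {e : R} (he : e*e = e) {D : R → R}
    (hD : IsLieDerivable D) (hi : CondI e) (hii : CondII e) {u w : R}
    (hu1 : e*u = u) (hu2 : u*e = 0) (hw1 : e*w = 0) (hw2 : w*e = w) :
    D (-u + -w) = D (-u) + D (-w) := by
  have hD0 : D 0 = 0 := Dzero hD
  have hnege : e*(-e) = (-e)*e := by rw [mul_neg, neg_mul]
  obtain ⟨z2, hz2, hX⟩ := claim1' hR he hD hi (d := e) rfl hw1 hw2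
  obtain ⟨z1, hz1, hY0⟩ := claim1 hR he hD hii (d := -e) hnege hu1 hu2
  have hY : D (u + -e) = D u + D (-e) + z1 := by
    rw [add_comm u (-e), hY0]
    abel
  have h2 := master2 hD hz2 hz1 hX hY
  have bEU : lieBr e u = u := by
    show e*u - u*e = u
    rw [hu1, hu2, sub_zero]
  have bEnegE : lieBr e (-e) = 0 := by
    show e*(-e) - (-e)*e = 0
    rw [mul_neg, neg_mul, sub_self]
  have bWnegE : lieBr w (-e) = -w := by
    show w*(-e) - (-e)*w = -w
    rw [mul_neg, neg_mul, hw2, hw1, neg_zero, sub_zero]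
  rw [lieBr_add_add, bEU, bEnegE, bWnegE, hD0] at h2
  simp only [add_zero] at h2
  -- h2 : D (u + lieBr w u + -w) = D u + D (lieBr w u) + D (-w)
  have h3 := master31 hD h2 (y := e)
  have bUE : lieBr u e = -u := by
    show u*e - e*u = -u
    rw [hu2, hu1, zero_sub]
  have bD0E : lieBr (lieBr w u) e = 0 := by
    have hdg := brWM_diag hR hw1 hw2 hu1 hu2
    show (lieBr w u)*e - e*(lieBr w u) = 0
    rw [hdg, sub_self]
  have bnegWE : lieBr (-w) e = -w := by
    show (-w)*e - e*(-w) = -w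
    rw [neg_mul, mul_neg, hw2, hw1, neg_zero, sub_zero]
  rw [lieBr_add3_left, bUE, bD0E, bnegWE, hD0] at h3
  simp only [add_zero] at h3
  exact h3

/-- Claim 2: exact additivity on R₁₂ × R₂₁ pairs. -/
private lemma claim2 (hR : IsAlternative R) {e : R} (he : e*e = e) {D : R → R}
    (hD : IsLieDerivable D) (hi : CondI e) (hii : CondII e) {u w : R}
    (hu1 : e*u = u) (hu2 : u*e = 0) (hw1 : e*w = 0) (hw2 : w*e = w) :
    D (u + w) = D u + D w := by
  have hu1' : e*(-u) = -u := by rw [mul_neg, hu1]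
  have hu2' : (-u)*e = 0 := by rw [neg_mul, hu2, neg_zero]
  have hw1' : e*(-w) = 0 := by rw [mul_neg, hw1, neg_zero]
  have hw2' : (-w)*e = -w := by rw [neg_mul, hw2]
  have h := claim2aux hR he hD hi hii hu1' hu2' hw1' hw2'
  simpa only [neg_neg] using h

/-- Claim 3: exact additivity on R₁₂. -/
private lemma claim3 (hR : IsAlternative R) {e : R} (he : e*e = e) {D : R → R}
    (hD : IsLieDerivable D) (hi : CondI e) (hii : CondII e) {u v : R}
    (hu1 : e*u = u) (hu2 : u*e = 0) (hv1 : e*v = v) (hv2 : v*e = 0) :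
    D (u + v) = D u + D v := by
  have hD0 : D 0 = 0 := Dzero hD
  have hnege : e*(-e) = (-e)*e := by rw [mul_neg, neg_mul]
  obtain ⟨z2, hz2, hX⟩ := claim1 hR he hD hii (d := e) rfl hu1 hu2
  obtain ⟨z1, hz1, hY0⟩ := claim1 hR he hD hii (d := -e) hnege hv1 hv2
  have hY : D (v + -e) = D v + D (-e) + z1 := by
    rw [add_comm v (-e), hY0]
    abel
  have h2 := master2 hD hz2 hz1 hX hY
  have bEV : lieBr e v = v := by
    show e*v - v*e = v
    rw [hv1, hv2, sub_zero]
  have bEnegE : lieBr e (-e) = 0 := by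
    show e*(-e) - (-e)*e = 0
    rw [mul_neg, neg_mul, sub_self]
  have bUnegE : lieBr u (-e) = u := by
    show u*(-e) - (-e)*u = u
    rw [mul_neg, neg_mul, hu2, hu1, neg_zero, zero_sub, neg_neg]
  rw [lieBr_add_add, bEV, bEnegE, bUnegE, hD0] at h2
  simp only [add_zero] at h2
  -- h2 : D (v + lieBr u v + u) = D v + D (lieBr u v) + D u
  have hc0 := brMM_W hR hu1 hu2 hv1 hv2
  have hsum1 : e*(u+v) = u + v := by rw [mul_add, hu1, hv1]
  have hsum2 : (u+v)*e = 0 := by rw [add_mul, hu2, hv2, add_zero]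
  have hC := claim2 hR he hD hi hii hsum1 hsum2 hc0.1 hc0.2
  have h2' : D ((u + v) + lieBr u v) = D v + D (lieBr u v) + D u := by
    rw [show (u + v) + lieBr u v = v + lieBr u v + u from by abel]
    exact h2
  have h4 : D (u+v) + D (lieBr u v) = (D u + D v) + D (lieBr u v) := by
    rw [hC.symm.trans h2']
    abel
  exact add_right_cancel h4

private lemma claim3'aux (hR : IsAlternative R) {e : R} (he : e*e = e) {D : R → R}
    (hD : IsLieDerivable D) (hi : CondI e) (hii : CondII e) {w w' : R}
    (hw1 : e*w = 0) (hw2 : w*e = w) (hw1' : e*w' = 0) (hw2' : w'*e = w') :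
    D (-w' + -w) = D (-w') + D (-w) := by
  have hD0 : D 0 = 0 := Dzero hD
  have hnege : e*(-e) = (-e)*e := by rw [mul_neg, neg_mul]
  obtain ⟨z2, hz2, hX⟩ := claim1' hR he hD hi (d := e) rfl hw1 hw2
  obtain ⟨z1, hz1, hY0⟩ := claim1' hR he hD hi (d := -e) hnege hw1' hw2'
  have hY : D (w' + -e) = D w' + D (-e) + z1 := by
    rw [add_comm w' (-e), hY0]
    abel
  have h2 := master2 hD hz2 hz1 hX hY
  have bEW' : lieBr e w' = -w' := by
    show e*w' - w'*e = -w'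
    rw [hw1', hw2', zero_sub]
  have bEnegE : lieBr e (-e) = 0 := by
    show e*(-e) - (-e)*e = 0
    rw [mul_neg, neg_mul, sub_self]
  have bWnegE : lieBr w (-e) = -w := by
    show w*(-e) - (-e)*w = -w
    rw [mul_neg, neg_mul, hw2, hw1, neg_zero, sub_zero]
  rw [lieBr_add_add, bEW', bEnegE, bWnegE, hD0] at h2
  simp only [add_zero] at h2
  -- h2 : D (-w' + lieBr w w' + -w) = D (-w') + D (lieBr w w') + D (-w)
  have hc1 := brWW_M hR hw1 hw2 hw1' hw2'
  have hsw1 : e*(-w' + -w) = 0 := by rw [mul_add, mul_neg, mul_neg, hw1, hw1', neg_zero, add_zero]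
  have hsw2 : (-w' + -w)*e = -w' + -w := by
    rw [add_mul, neg_mul, neg_mul, hw2, hw2']
  have hC := claim2 hR he hD hi hii hc1.1 hc1.2 hsw1 hsw2
  have h2' : D (lieBr w w' + (-w' + -w)) = D (-w') + D (lieBr w w') + D (-w) := by
    rw [show lieBr w w' + (-w' + -w) = -w' + lieBr w w' + -w from by abel]
    exact h2
  have h4 : D (-w' + -w) + D (lieBr w w') = (D (-w') + D (-w)) + D (lieBr w w') := by
    have h5 := hC.symm.trans h2'
    rw [add_comm (D (-w' + -w)) (D (lieBr w w')), h5]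
    abel
  exact add_right_cancel h4

/-- Claim 3': exact additivity on R₂₁. -/
private lemma claim3' (hR : IsAlternative R) {e : R} (he : e*e = e) {D : R → R}
    (hD : IsLieDerivable D) (hi : CondI e) (hii : CondII e) {w w' : R}
    (hw1 : e*w = 0) (hw2 : w*e = w) (hw1' : e*w' = 0) (hw2' : w'*e = w') :
    D (w + w') = D w + D w' := by
  have hb1 : e*(-w') = 0 := by rw [mul_neg, hw1', neg_zero]
  have hb2 : (-w')*e = -w' := by rw [neg_mul, hw2']
  have hc1 : e*(-w) = 0 := by rw [mul_neg, hw1, neg_zero]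
  have hc2 : (-w)*e = -w := by rw [neg_mul, hw2]
  have h := claim3'aux hR he hD hi hii hb1 hb2 hc1 hc2
  simpa only [neg_neg] using h


variable {R : Type*} [NonUnitalNonAssocRing R]

/-- Claim 4: diagonal pairs, additivity modulo centre. -/
private lemma claim4 (hR : IsAlternative R) {e : R} (he : e*e = e) {D : R → R}
    (hD : IsLieDerivable D) (hi : CondI e) (hii : CondII e) {d d' : R}
    (hd : e*d = d*e) (hd' : e*d' = d'*e) :
    ∃ z ∈ ringCenter R, D (d + d') = D d + D d' + z := by
  have hD0 : D 0 = 0 := Dzero hD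
  have hbr_d_e : lieBr d e = 0 := by
    show d*e - e*d = 0
    rw [hd, sub_self]
  have hbr_d'_e : lieBr d' e = 0 := by
    show d'*e - e*d' = 0
    rw [hd', sub_self]
  have hdiag : lieBr (D (d + d') - D d - D d') e = 0 := by
    have h := fact1 hD d d' e
    rw [hbr_d_e, hbr_d'_e, add_zero, hD0] at h
    rw [h]
    abel
  have hsd : e*(D (d + d') - D d - D d') = (D (d + d') - D d - D d')*e := by
    have h : (D (d + d') - D d - D d')*e - e*(D (d + d') - D d - D d') = 0 := hdiag
    exact (sub_eq_zero.mp h).symm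
  have hcomm : ∀ m : R, e*m = m → m*e = 0 → lieBr (D (d + d') - D d - D d') m = 0 := by
    intro m hm1 hm2
    have hval := fact1 hD d d' m
    have hA := brDiagM hR he hd hm1 hm2
    have hB := brDiagM hR he hd' hm1 hm2
    have hadd := claim3 hR he hD hi hii hA.1 hA.2 hB.1 hB.2
    rw [hval, hadd]
    abel
  have hcent := centM hR he hi hsd hcomm
  exact ⟨D (d + d') - D d - D d', hcent, by abel⟩

/-- Claim 5: diagonal plus off-diagonal, additivity modulo centre. -/
private lemma claim5 (hR : IsAlternative R) {e : R} (he : e*e = e) {D : R → R}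
    (hD : IsLieDerivable D) (hi : CondI e) (hii : CondII e) {d u w : R}
    (hd : e*d = d*e) (hu1 : e*u = u) (hu2 : u*e = 0) (hw1 : e*w = 0) (hw2 : w*e = w) :
    ∃ z ∈ ringCenter R, D (d + (u + w)) = D d + D (u + w) + z := by
  have hD0 : D 0 = 0 := Dzero hD
  have hbr_d_e : lieBr d e = 0 := by
    show d*e - e*d = 0
    rw [hd, sub_self]
  have bUE : lieBr u e = -u := by
    show u*e - e*u = -u
    rw [hu2, hu1, zero_sub]
  have bWE : lieBr w e = w := by
    show w*e - e*w = w
    rw [hw1, hw2, sub_zero]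
  have hbr_o_e : lieBr (u + w) e = -u + w := by
    rw [lieBr_add_left, bUE, bWE]
  have hdiag : lieBr (D (d + (u + w)) - D d - D (u + w)) e = 0 := by
    have h := fact1 hD d (u + w) e
    rw [hbr_d_e, hbr_o_e, zero_add, hD0] at h
    rw [h]
    abel
  have hsd : e*(D (d + (u + w)) - D d - D (u + w))
      = (D (d + (u + w)) - D d - D (u + w))*e := by
    have h : (D (d + (u + w)) - D d - D (u + w))*e
        - e*(D (d + (u + w)) - D d - D (u + w)) = 0 := hdiag
    exact (sub_eq_zero.mp h).symm
  have hcomm : ∀ w' : R, e*w' = 0 → w'*e = w'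
      → lieBr (D (d + (u + w)) - D d - D (u + w)) w' = 0 := by
    intro w' hw1' hw2'
    have hmemW := brDiagW hR he hsd hw1' hw2'
    have hval := fact1 hD d (u + w) w'
    rw [lieBr_add_left u w w'] at hval
    have hA := brDiagW hR he hd hw1' hw2'
    have hBu := brMW_diag hR hu1 hu2 hw1' hw2'
    have hBw := brWW_M hR hw1 hw2 hw1' hw2'
    have hVdiag : lieBr (D (lieBr d w' + (lieBr u w' + lieBr w w'))
        - D (lieBr d w') - D (lieBr u w' + lieBr w w')) e = 0 := by
      have h2 := fact1 hD (lieBr d w') (lieBr u w' + lieBr w w') e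
      have hbrA : lieBr (lieBr d w') e = lieBr d w' := by
        show (lieBr d w')*e - e*(lieBr d w') = lieBr d w'
        rw [hA.2, hA.1, sub_zero]
      have hbrBu : lieBr (lieBr u w') e = 0 := by
        show (lieBr u w')*e - e*(lieBr u w') = 0
        rw [hBu, sub_self]
      have hbrBw : lieBr (lieBr w w') e = -(lieBr w w') := by
        show (lieBr w w')*e - e*(lieBr w w') = -(lieBr w w')
        rw [hBw.2, hBw.1, zero_sub]
      rw [lieBr_add_left, hbrA, hbrBu, hbrBw, zero_add] at h2
      have hnB1 : e*(-(lieBr w w')) = -(lieBr w w') := by rw [mul_neg, hBw.1]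
      have hnB2 : (-(lieBr w w'))*e = 0 := by rw [neg_mul, hBw.2, neg_zero]
      have hC := claim2 hR he hD hi hii hnB1 hnB2 hA.1 hA.2
      rw [show lieBr d w' + -(lieBr w w') = -(lieBr w w') + lieBr d w' from by abel,
        hC] at h2
      rw [h2]
      abel
    rw [← hval] at hVdiag
    exact W_diag_zero hmemW.1 hmemW.2 hVdiag
  have hcent := centW hR he hii hsd hcomm
  exact ⟨D (d + (u + w)) - D d - D (u + w), hcent, by abel⟩


variable {R : Type*} [NonUnitalNonAssocRing R]

private lemma proj12 (hR : IsAlternative R) {e : R} (he : e*e = e) (x : R) :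
    e*(e*x - e*x*e) = e*x - e*x*e ∧ (e*x - e*x*e)*e = 0 := by
  have h1 : e*(e*x) = e*x := by rw [← hR.1 e x, he]
  have h2 : e*(e*x*e) = e*x*e := by
    rw [flexeq hR e x, ← hR.1 e (x*e), he]
  have h3 : (e*x*e)*e = e*x*e := by
    rw [hR.2 e (e*x), he]
  constructor
  · rw [mul_sub, h1, h2]
  · rw [sub_mul, h3, sub_self]

private lemma proj21 (hR : IsAlternative R) {e : R} (he : e*e = e) (x : R) :
    e*(x*e - e*(x*e)) = 0 ∧ (x*e - e*(x*e))*e = x*e - e*(x*e) := by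
  have h3 : (e*x*e)*e = e*x*e := by
    rw [hR.2 e (e*x), he]
  have h4 : e*(e*(x*e)) = e*(x*e) := by rw [← hR.1 e (x*e), he]
  have h5 : (x*e)*e = x*e := by rw [hR.2 e x, he]
  have h6 : (e*(x*e))*e = e*(x*e) := by
    rw [← flexeq hR e x]
    exact h3
  constructor
  · rw [mul_sub, h4, sub_self]
  · rw [sub_mul, h5, h6]

private lemma projD (hR : IsAlternative R) {e : R} (he : e*e = e) (x : R) :
    e*(x - (e*x - e*x*e) - (x*e - e*(x*e))) = (x - (e*x - e*x*e) - (x*e - e*(x*e)))*e := by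
  have h1 : e*(e*x) = e*x := by rw [← hR.1 e x, he]
  have h2 : e*(e*x*e) = e*x*e := by
    rw [flexeq hR e x, ← hR.1 e (x*e), he]
  have h3 : (e*x*e)*e = e*x*e := by rw [hR.2 e (e*x), he]
  have h4 : e*(e*(x*e)) = e*(x*e) := by rw [← hR.1 e (x*e), he]
  have h5 : (x*e)*e = x*e := by rw [hR.2 e x, he]
  have h6 : (e*(x*e))*e = e*(x*e) := by
    rw [← flexeq hR e x]
    exact h3
  have hL : e*(x - (e*x - e*x*e) - (x*e - e*(x*e))) = e*x*e := by
    simp only [mul_sub]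
    rw [h1, h2, h4]
    abel
  have hRt : (x - (e*x - e*x*e) - (x*e - e*(x*e)))*e = e*(x*e) := by
    simp only [sub_mul]
    rw [h3, h5, h6]
    abel
  rw [hL, hRt, flexeq hR e x]

private lemma claim7 (hR : IsAlternative R) {e : R} (he : e*e = e) {D : R → R}
    (hD : IsLieDerivable D) (hi : CondI e) (hii : CondII e) (x : R) :
    ∃ z ∈ ringCenter R, D x = D (x - (e*x - e*x*e) - (x*e - e*(x*e)))
      + D (e*x - e*x*e) + D (x*e - e*(x*e)) + z := by
  have h12 := proj12 hR he x
  have h21 := proj21 hR he x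
  have hdg := projD hR he x
  obtain ⟨z, hz, h5⟩ := claim5 hR he hD hi hii hdg h12.1 h12.2 h21.1 h21.2
  have hsum : (x - (e*x - e*x*e) - (x*e - e*(x*e))) + ((e*x - e*x*e) + (x*e - e*(x*e)))
      = x := by abel
  rw [hsum] at h5
  have h2 := claim2 hR he hD hi hii h12.1 h12.2 h21.1 h21.2
  refine ⟨z, hz, ?_⟩
  rw [h5, h2]
  abel


end AlmostAddProof

theorem lieDer_almost_additive
    {R : Type*} [NonUnitalNonAssocRing R] (hR : IsAlternative R)
    (e : R) (he : IsNontrivialIdempotent e) (hi : CondI e) (hii : CondII e)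
    (D : R → R) (hD : IsLieDerivable D) :
    ∀ a b : R, ∃ z ∈ ringCenter R, D (a + b) = D a + D b + z := by
  intro a b
  have he' : e*e = e := he.1
  obtain ⟨za, hza, ha⟩ := AlmostAddProof.claim7 hR he' hD hi hii a
  obtain ⟨zb, hzb, hb⟩ := AlmostAddProof.claim7 hR he' hD hi hii b
  obtain ⟨zs, hzs, hs⟩ := AlmostAddProof.claim7 hR he' hD hi hii (a + b)
  have h12a := AlmostAddProof.proj12 hR he' a
  have h12b := AlmostAddProof.proj12 hR he' b
  have h21a := AlmostAddProof.proj21 hR he' a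
  have h21b := AlmostAddProof.proj21 hR he' b
  have hdga := AlmostAddProof.projD hR he' a
  have hdgb := AlmostAddProof.projD hR he' b
  obtain ⟨z4, hz4, h4⟩ := AlmostAddProof.claim4 hR he' hD hi hii hdga hdgb
  have h3 := AlmostAddProof.claim3 hR he' hD hi hii h12a.1 h12a.2 h12b.1 h12b.2
  have h3' := AlmostAddProof.claim3' hR he' hD hi hii h21a.1 h21a.2 h21b.1 h21b.2
  have e12 : e*(a+b) - e*(a+b)*e = (e*a - e*a*e) + (e*b - e*b*e) := by
    simp only [mul_add, add_mul]
    abel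
  have e21 : (a+b)*e - e*((a+b)*e) = (a*e - e*(a*e)) + (b*e - e*(b*e)) := by
    simp only [mul_add, add_mul]
    abel
  have eD : (a+b) - (e*(a+b) - e*(a+b)*e) - ((a+b)*e - e*((a+b)*e))
      = (a - (e*a - e*a*e) - (a*e - e*(a*e))) + (b - (e*b - e*b*e) - (b*e - e*(b*e))) := by
    simp only [mul_add, add_mul]
    abel
  rw [eD, e12, e21, h4, h3, h3'] at hs
  refine ⟨zs + z4 - za - zb, ?_, ?_⟩
  · exact AlmostAddProof.center_sub
      (AlmostAddProof.center_sub (AlmostAddProof.center_add hzs hz4) hza) hzb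
  · rw [hs, ha, hb]
    abel
end

section
/- Let R be a 3-torsion free prime alternative ring with a nontrivial idempotent e₁. Then R satisfies both: (i) for all a₁₁ ∈ R₁₁ and a₂₂ ∈ R₂₂, if [a₁₁ + a₂₂, m] = 0 for every m ∈ R₁₂, then a₁₁ + a₂₂ ∈ Z(R); and (ii) for all a₁₁ ∈ R₁₁ and a₂₂ ∈ R₂₂, if [a₁₁ + a₂₂, m] = 0 for every m ∈ R₂₁, then a₁₁ + a₂₂ ∈ Z(R). -/
/-!
The associator of an alternative ring is alternating. Hence the Peirce spaces `R_ij` of an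
idempotent multiply like matrix units, except that `R_ij R_ij ⊆ R_ji` for `i ≠ j`, and the
hypothesis `[a₁₁ + a₂₂, R₁₂] = 0` reads `a₁₁ m = m a₂₂` for `m ∈ R₁₂`. Moving factors across
associators gives `[a₁₁, r] R₁₂ = 0` for `r ∈ R₁₁`, `R₁₂ [a₂₂, s] = 0` for `s ∈ R₂₂`, and for
`n ∈ R₂₁` the element `c = a₂₂ n - n a₁₁` annihilates `R₁₂` and `R₂₁` on both sides.
In a prime ring all of these vanish. If `W` is the set of `w ∈ R₁₁` with `w R₁₂ = 0`, then
`W + R₂₁ W` is an ideal annihilating `R₁₂` from the left, and `R₁₂ ≠ 0`; the statement for `a₂₂`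
is the one for `a₁₁` in `Rᵐᵒᵖ`; and the elements such as `c` form an ideal of square zero. (If
`R₁₂` were `0`, then `R₂₁` would be such an ideal as well, and `R₁₁`, `R₂₂` would be ideals with
zero product, making `e` an identity.) So `a₁₁ + a₂₂` commutes with `R`, and then
`[xy, z] - x[y, z] - [x, z]y = 3(x, y, z)` and 3-torsion freeness make it central.
Condition (ii) is condition (i) with the two indices exchanged.
-/

open MulOpposite

section AlternativeRings

variable {R : Type*} [NonUnitalNonAssocRing R]

namespace IsAlternative

variable (hA : IsAlternative R)
include hA

theorem associator_swap_left (x y z : R) : associator y x z = -associator x y z := by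
  have h := hA.1 (x + y) z
  simp only [add_mul, mul_add] at h
  simp only [associator_apply]
  linear_combination (norm := abel) h - hA.1 x z - hA.1 y z

theorem associator_swap_right (x y z : R) : associator x z y = -associator x y z := by
  have h := hA.2 (y + z) x
  simp only [add_mul, mul_add] at h
  simp only [associator_apply]
  linear_combination (norm := abel) h - hA.2 y x - hA.2 z x

theorem associator_cyclic (x y z : R) : associator y z x = associator x y z := by
  rw [hA.associator_swap_right y x z, hA.associator_swap_left x y z, neg_neg]

theorem flexible (x y : R) : x * y * x = x * (y * x) := by
  have h : associator x y x = 0 := by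
    rw [hA.associator_swap_right x x y, associator_apply, sub_eq_zero.2 (hA.1 x y), neg_zero]
  exact sub_eq_zero.1 h

theorem mulOpposite : IsAlternative Rᵐᵒᵖ :=
  ⟨fun x y => unop_injective (hA.2 x.unop y.unop).symm,
    fun x y => unop_injective (hA.1 x.unop y.unop).symm⟩

theorem mem_ringCenter_of_forall_commute (htf : ThreeTorsionFree R) {z : R}
    (hz : ∀ x, z * x = x * z) : z ∈ ringCenter R := by
  have h : ∀ x y, associator x y z = 0 := fun x y => htf _ <|
    calc associator x y z + associator x y z + associator x y z
        = associator x y z - associator x z y + associator z x y := by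
          rw [hA.associator_swap_right x y z, hA.associator_cyclic y z x,
            hA.associator_cyclic x y z]
          abel
      _ = 0 := by
          simp only [associator_apply]
          rw [hz (x * y), hz x, hz y]
          abel
  refine ⟨fun x y => sub_eq_zero.1 ?_, fun x y => sub_eq_zero.1 ?_,
    fun x y => sub_eq_zero.1 (h x y), hz⟩
  · rw [← associator_apply, hA.associator_cyclic y z x, hA.associator_cyclic x y z, h]
  · rw [← associator_apply, hA.associator_swap_right x y z, h, neg_zero]

theorem isTwoSidedIdealSet_setOf_forall_mul_eq_zero {D : Set R} (hD : IsTwoSidedIdealSet D) :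
    IsTwoSidedIdealSet {x | ∀ d ∈ D, d * x = 0} := by
  refine ⟨fun d _ => mul_zero d,
    fun x y hx hy d hd => by rw [mul_add, hx d hd, hy d hd, add_zero],
    fun x hx d hd => by rw [mul_neg, hx d hd, neg_zero], fun r x hx => ?_⟩
  have hleft : ∀ d ∈ D, d * (r * x) = 0 := fun d hd => by
    have h := hA.associator_swap_left d r x
    simp only [associator_apply, hx d hd, hx _ (hD.2.2.2 r d hd).1, hx _ (hD.2.2.2 r d hd).2,
      mul_zero] at h
    simpa using h.symm
  refine ⟨hleft, fun d hd => ?_⟩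
  have h := hA.associator_swap_right d r x
  simp only [associator_apply, hx d hd, hx _ (hD.2.2.2 r d hd).2, hleft d hd, zero_mul] at h
  simpa using h

end IsAlternative

theorem isTwoSidedIdealSet_of_mul_mem (S : AddSubgroup R)
    (h : ∀ r, ∀ a ∈ S, r * a ∈ S ∧ a * r ∈ S) : IsTwoSidedIdealSet (S : Set R) :=
  ⟨S.zero_mem, fun _ _ => S.add_mem, fun _ => S.neg_mem, h⟩

namespace IsPrimeRing

variable (hP : IsPrimeRing R)
include hP

theorem eq_zero_or_eq_zero_of_mul_eq_zero {A B : Set R} (hA : IsTwoSidedIdealSet A)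
    (hB : IsTwoSidedIdealSet B) (hAB : ∀ a ∈ A, ∀ b ∈ B, a * b = 0) {a b : R} (ha : a ∈ A)
    (hb : b ∈ B) : a = 0 ∨ b = 0 := by
  by_contra! h
  obtain ⟨a', ha', b', hb', hne⟩ :=
    hP A B hA hB (fun hA0 => h.1 (Set.mem_singleton_iff.1 (hA0 ▸ ha)))
      (fun hB0 => h.2 (Set.mem_singleton_iff.1 (hB0 ▸ hb)))
  exact hne (hAB a' ha' b' hb')

theorem mulOpposite : IsPrimeRing Rᵐᵒᵖ := by
  have hpre : ∀ {C : Set Rᵐᵒᵖ}, IsTwoSidedIdealSet C → IsTwoSidedIdealSet (op ⁻¹' C) :=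
    fun ⟨h0, hadd, hneg, hmul⟩ => ⟨h0, fun a b => hadd (op a) (op b), fun a => hneg (op a),
      fun r a ha => ⟨(hmul (op r) (op a) ha).2, (hmul (op r) (op a) ha).1⟩⟩
  have hne {C : Set Rᵐᵒᵖ} (hC : IsTwoSidedIdealSet C) (hC0 : C ≠ {0}) :
      ∃ c ∈ C, c ≠ 0 := by
    by_contra! h
    exact hC0 (Set.eq_singleton_iff_unique_mem.2 ⟨hC.1, h⟩)
  intro A B hA hB hA0 hB0
  by_contra! hAB
  obtain ⟨a, ha, ha0⟩ := hne hA hA0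
  obtain ⟨b, hb, hb0⟩ := hne hB hB0
  rcases hP.eq_zero_or_eq_zero_of_mul_eq_zero (hpre hB) (hpre hA)
    (fun b' hb' a' ha' => by simpa using congrArg unop (hAB _ ha' _ hb'))
    (show op b.unop ∈ B from hb) (show op a.unop ∈ A from ha) with h | h
  · exact hb0 (unop_injective h)
  · exact ha0 (unop_injective h)

end IsPrimeRing

/-- Peirce spaces indexed by `Bool`, with `true` standing for the index `1` and `false` for `2`:
`peirceSpace e true false` is `peirce12 e`, and so on. -/
def peirceSpace (e : R) (i j : Bool) : AddSubgroup R where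
  carrier := {x | e * x = cond i x 0 ∧ x * e = cond j x 0}
  add_mem' := by
    rintro x y ⟨hx₁, hx₂⟩ ⟨hy₁, hy₂⟩
    cases i <;> cases j <;> simp_all [mul_add, add_mul]
  zero_mem' := by cases i <;> cases j <;> simp
  neg_mem' := by
    rintro x ⟨hx₁, hx₂⟩
    cases i <;> cases j <;> simp_all

theorem mem_peirceSpace {e x : R} {i j : Bool} :
    x ∈ peirceSpace e i j ↔ e * x = cond i x 0 ∧ x * e = cond j x 0 := Iff.rfl

theorem mem_peirceSpace_op {e : R} {x : Rᵐᵒᵖ} {i j : Bool} :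
    x ∈ peirceSpace (op e) i j ↔ x.unop ∈ peirceSpace e j i := by
  cases i <;> cases j <;>
    simp only [mem_peirceSpace, cond_true, cond_false, ← unop_inj, unop_mul, unop_op, unop_zero,
      and_comm]

namespace IsAlternative

variable (hA : IsAlternative R) {e x y : R} {i j k : Bool}
include hA

theorem mul_mem_peirceSpace (hx : x ∈ peirceSpace e i j) (hy : y ∈ peirceSpace e j k) :
    x * y ∈ peirceSpace e i k := by
  have hl := hA.associator_swap_left x e y
  have hr := hA.associator_swap_right x e y
  simp only [associator_apply, hx.1, hx.2, hy.1, hy.2] at hl hr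
  constructor
  · cases i <;> cases j <;> simp only [cond_true, cond_false, zero_mul, mul_zero] at hl ⊢ <;>
      linear_combination (norm := abel1) -hl
  · cases j <;> cases k <;> simp only [cond_true, cond_false, zero_mul, mul_zero] at hr ⊢ <;>
      linear_combination (norm := abel1) hr

theorem mul_mem_peirceSpace_of_ne (hx : x ∈ peirceSpace e i j) (hy : y ∈ peirceSpace e i j)
    (hij : i ≠ j) : x * y ∈ peirceSpace e j i := by
  have hl := hA.associator_swap_left x e y
  have hr := hA.associator_swap_right x e y
  simp only [associator_apply, hx.1, hx.2, hy.1, hy.2] at hl hr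
  constructor
  · cases i <;> cases j <;> simp only [cond_true, cond_false, zero_mul, mul_zero] at hl ⊢ <;>
      first | exact absurd rfl hij | linear_combination (norm := abel1) -hl
  · cases i <;> cases j <;> simp only [cond_true, cond_false, zero_mul, mul_zero] at hr ⊢ <;>
      first | exact absurd rfl hij | linear_combination (norm := abel1) hr

theorem mul_eq_zero_of_peirceSpace (hx : x ∈ peirceSpace e i j) (hy : y ∈ peirceSpace e k i)
    (hjk : j ≠ k) : x * y = 0 := by
  have h := (hA.associator_cyclic x y e).trans (hA.associator_swap_right x e y)
  simp only [associator_apply, hx.1, hx.2, hy.1, hy.2] at h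
  cases i <;> cases j <;> cases k <;> simp only [cond_true, cond_false, zero_mul, mul_zero] at h <;>
    first
    | exact absurd rfl hjk
    | linear_combination (norm := abel1) h
    | linear_combination (norm := abel1) -h

theorem mul_eq_zero_of_peirceSpace_true_false (he : e * e = e)
    (hx : x ∈ peirceSpace e true true) (hy : y ∈ peirceSpace e false false) :
    x * y = 0 ∧ y * x = 0 := by
  have h₁ := hA.associator_swap_left x e y
  have h₂ := hA.associator_swap_left y e x
  have h₃ := (hA.associator_cyclic x y e).trans (hA.associator_swap_right x e y)
  simp only [associator_apply, hx.1, hx.2, hy.1, hy.2, cond_true, cond_false, zero_mul,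
    mul_zero] at h₁ h₂ h₃
  have hcomm : y * x = x * y := by linear_combination (norm := abel1) -h₃
  have hexy : e * (x * y) = x * y + x * y := by linear_combination (norm := abel1) -h₁
  have h₄ := hA.1 e (x * y)
  rw [he, hexy, mul_add, hexy] at h₄
  rw [hcomm, hexy] at h₂
  have hxy : x * y = 0 := by linear_combination (norm := abel1) h₄ - h₂
  exact ⟨hxy, hcomm ▸ hxy⟩

theorem mul_eq_zero_of_peirceSpace_diag (he : e * e = e) (hx : x ∈ peirceSpace e i i)
    (hy : y ∈ peirceSpace e j j) (hij : i ≠ j) : x * y = 0 := by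
  cases i <;> cases j
  · exact absurd rfl hij
  · exact (hA.mul_eq_zero_of_peirceSpace_true_false he hy hx).2
  · exact (hA.mul_eq_zero_of_peirceSpace_true_false he hx hy).1
  · exact absurd rfl hij

theorem exists_peirceSpace_decomposition_true_false (he : e * e = e) (x : R) :
    ∃ a ∈ peirceSpace e true true, ∃ b ∈ peirceSpace e true false,
      ∃ c ∈ peirceSpace e false true, ∃ d ∈ peirceSpace e false false,
        x = a + b + c + d := by
  have hl : ∀ z, e * (e * z) = e * z := fun z => by rw [← hA.1, he]
  have hr : ∀ z, z * e * e = z * e := fun z => by rw [hA.2, he]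
  refine ⟨e * (x * e), ?_, e * x - e * (x * e), ?_, x * e - e * (x * e), ?_,
    x - e * x - x * e + e * (x * e), ?_, by abel⟩ <;>
  simp only [mem_peirceSpace, cond_true, cond_false, mul_add, add_mul, mul_sub, sub_mul, hl, hr,
    hA.flexible]
  all_goals constructor <;> first | trivial | abel

theorem exists_peirceSpace_decomposition (he : e * e = e) (hij : i ≠ j) (x : R) :
    ∃ a ∈ peirceSpace e i i, ∃ b ∈ peirceSpace e i j,
      ∃ c ∈ peirceSpace e j i, ∃ d ∈ peirceSpace e j j, x = a + b + c + d := by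
  obtain ⟨a, ha, b, hb, c, hc, d, hd, rfl⟩ :=
    hA.exists_peirceSpace_decomposition_true_false he x
  cases i <;> cases j
  · exact absurd rfl hij
  · exact ⟨d, hd, c, hc, b, hb, a, ha, by abel⟩
  · exact ⟨a, ha, b, hb, c, hc, d, hd, rfl⟩
  · exact absurd rfl hij

end IsAlternative

def peirceAnn (e : R) (i j : Bool) : Set R :=
  {w | w ∈ peirceSpace e i i ∧ ∀ m ∈ peirceSpace e i j, w * m = 0}

def peirceAnnSpan (e : R) (i j : Bool) : AddSubgroup R :=
  .closure (peirceAnn e i j ∪ Set.image2 (· * ·) (peirceSpace e j i) (peirceAnn e i j))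

namespace IsAlternative

variable (hA : IsAlternative R) {e w m n n' r : R} {i j : Bool}
include hA

theorem associator_eq_zero_of_peirceSpace (hij : i ≠ j) (hw : w ∈ peirceSpace e i i)
    (hr : r ∈ peirceSpace e i i) (hm : m ∈ peirceSpace e i j) : associator w r m = 0 := by
  rw [← hA.associator_cyclic w r m, associator_apply,
    hA.mul_eq_zero_of_peirceSpace (hA.mul_mem_peirceSpace hr hm) hw hij.symm,
    hA.mul_eq_zero_of_peirceSpace hm hw hij.symm, mul_zero, sub_zero]

theorem mul_mem_peirceAnn (hij : i ≠ j) (hw : w ∈ peirceAnn e i j)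
    (hr : r ∈ peirceSpace e i i) : w * r ∈ peirceAnn e i j := by
  refine ⟨hA.mul_mem_peirceSpace hw.1 hr, fun m hm => ?_⟩
  rw [sub_eq_zero.1 (hA.associator_eq_zero_of_peirceSpace hij hw.1 hr hm),
    hw.2 _ (hA.mul_mem_peirceSpace hr hm)]

theorem mul_mem_peirceAnn_left (hij : i ≠ j) (hw : w ∈ peirceAnn e i j)
    (hr : r ∈ peirceSpace e i i) : r * w ∈ peirceAnn e i j := by
  refine ⟨hA.mul_mem_peirceSpace hr hw.1, fun m hm => ?_⟩
  have h : associator r w m = 0 := by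
    rw [hA.associator_swap_left w r m, hA.associator_eq_zero_of_peirceSpace hij hw.1 hr hm,
      neg_zero]
  rw [sub_eq_zero.1 h, hw.2 m hm, mul_zero]

theorem mul_peirceAnn_mul_eq_zero_ij (he : e * e = e) (hij : i ≠ j) (hn : n ∈ peirceSpace e j i)
    (hw : w ∈ peirceAnn e i j) (hm : m ∈ peirceSpace e i j) : n * w * m = 0 := by
  have h := hA.associator_swap_left w n m
  simp only [associator_apply, hw.2 m hm, hA.mul_eq_zero_of_peirceSpace hw.1 hn hij,
    hA.mul_eq_zero_of_peirceSpace_diag he hw.1 (hA.mul_mem_peirceSpace hn hm) hij, mul_zero,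
    zero_mul] at h
  simpa using h

theorem mul_peirceAnn_mul_eq_zero_ji (hij : i ≠ j) (hn : n ∈ peirceSpace e j i)
    (hw : w ∈ peirceAnn e i j) (hn' : n' ∈ peirceSpace e j i) : n * w * n' = 0 := by
  have h := hA.associator_swap_left w n n'
  simp only [associator_apply, hA.mul_eq_zero_of_peirceSpace hw.1 hn hij,
    hA.mul_eq_zero_of_peirceSpace hw.1 hn' hij,
    hw.2 _ (hA.mul_mem_peirceSpace_of_ne hn hn' hij.symm), mul_zero, zero_mul] at h
  simpa using h

theorem mul_mem_peirceAnnSpan_of_mem_peirceAnn (he : e * e = e) (hij : i ≠ j)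
    (hw : w ∈ peirceAnn e i j) (y : R) :
    y * w ∈ peirceAnnSpan e i j ∧ w * y ∈ peirceAnnSpan e i j := by
  obtain ⟨y₁, h₁, y₂, h₂, y₃, h₃, y₄, h₄, rfl⟩ :=
    hA.exists_peirceSpace_decomposition he hij y
  simp only [add_mul, mul_add, hA.mul_eq_zero_of_peirceSpace h₂ hw.1 hij.symm,
    hA.mul_eq_zero_of_peirceSpace_diag he h₄ hw.1 hij.symm, hw.2 y₂ h₂,
    hA.mul_eq_zero_of_peirceSpace hw.1 h₃ hij,
    hA.mul_eq_zero_of_peirceSpace_diag he hw.1 h₄ hij,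
    add_zero]
  exact ⟨add_mem (AddSubgroup.subset_closure (Or.inl (hA.mul_mem_peirceAnn_left hij hw h₁)))
      (AddSubgroup.subset_closure (Or.inr (Set.mem_image2_of_mem h₃ hw))),
    AddSubgroup.subset_closure (Or.inl (hA.mul_mem_peirceAnn hij hw h₁))⟩

theorem mul_peirceAnn_mul_mem_peirceAnnSpan (he : e * e = e) (hij : i ≠ j)
    (hn : n ∈ peirceSpace e j i) (hw : w ∈ peirceAnn e i j) (y : R) :
    n * w * y ∈ peirceAnnSpan e i j := by
  obtain ⟨y₁, h₁, y₂, h₂, y₃, h₃, y₄, h₄, rfl⟩ :=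
    hA.exists_peirceSpace_decomposition he hij y
  have hassoc : n * w * y₁ = n * (w * y₁) := by
    have h := hA.associator_swap_left w n y₁
    simp only [associator_apply, hA.mul_eq_zero_of_peirceSpace hw.1 hn hij,
      hA.mul_eq_zero_of_peirceSpace hw.1 (hA.mul_mem_peirceSpace hn h₁) hij, zero_mul] at h
    simpa [sub_eq_zero] using h
  rw [mul_add, mul_add, mul_add, hassoc, hA.mul_peirceAnn_mul_eq_zero_ij he hij hn hw h₂,
    hA.mul_peirceAnn_mul_eq_zero_ji hij hn hw h₃,
    hA.mul_eq_zero_of_peirceSpace (hA.mul_mem_peirceSpace hn hw.1) h₄ hij, add_zero, add_zero,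
    add_zero]
  exact AddSubgroup.subset_closure
    (Or.inr (Set.mem_image2_of_mem hn (hA.mul_mem_peirceAnn hij hw h₁)))

theorem mul_mul_peirceAnn_mem_peirceAnnSpan (he : e * e = e) (hij : i ≠ j)
    (hn : n ∈ peirceSpace e j i) (hw : w ∈ peirceAnn e i j) (y : R) :
    y * (n * w) ∈ peirceAnnSpan e i j := by
  obtain ⟨y₁, h₁, y₂, h₂, y₃, h₃, y₄, h₄, rfl⟩ :=
    hA.exists_peirceSpace_decomposition he hij y
  have hnw : n * w ∈ peirceSpace e j i := hA.mul_mem_peirceSpace hn hw.1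
  have h₂' := hA.associator_cyclic y₂ n w
  simp only [associator_apply, hA.mul_peirceAnn_mul_eq_zero_ij he hij hn hw h₂, hw.2 y₂ h₂,
    mul_zero] at h₂'
  have h₃' := hA.associator_cyclic y₃ n w
  simp only [associator_apply, hA.mul_peirceAnn_mul_eq_zero_ji hij hn hw h₃,
    hA.mul_eq_zero_of_peirceSpace hw.1 h₃ hij,
    hA.mul_eq_zero_of_peirceSpace (hA.mul_mem_peirceSpace_of_ne h₃ hn hij.symm) hw.1 hij.symm,
    mul_zero] at h₃'
  have h₄' := hA.associator_cyclic y₄ n w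
  simp only [associator_apply, hA.mul_eq_zero_of_peirceSpace hnw h₄ hij,
    hA.mul_eq_zero_of_peirceSpace_diag he hw.1 h₄ hij, mul_zero] at h₄'
  rw [add_mul, add_mul, add_mul, hA.mul_eq_zero_of_peirceSpace h₁ hnw hij, zero_add,
    show y₂ * (n * w) = y₂ * n * w by linear_combination (norm := abel1) h₂',
    show y₃ * (n * w) = 0 by linear_combination (norm := abel1) h₃',
    show y₄ * (n * w) = y₄ * n * w by linear_combination (norm := abel1) h₄', add_zero]
  exact add_mem (AddSubgroup.subset_closure
      (Or.inl (hA.mul_mem_peirceAnn_left hij hw (hA.mul_mem_peirceSpace h₂ hn))))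
    (AddSubgroup.subset_closure
      (Or.inr (Set.mem_image2_of_mem (hA.mul_mem_peirceSpace h₄ hn) hw)))

theorem isTwoSidedIdealSet_peirceAnnSpan (he : e * e = e) (hij : i ≠ j) :
    IsTwoSidedIdealSet (peirceAnnSpan e i j : Set R) := by
  refine isTwoSidedIdealSet_of_mul_mem _ fun y d hd => ?_
  induction hd using AddSubgroup.closure_induction with
  | mem g hg =>
    rcases hg with hw | ⟨n, hn, w, hw, rfl⟩
    · exact hA.mul_mem_peirceAnnSpan_of_mem_peirceAnn he hij hw y
    · exact ⟨hA.mul_mul_peirceAnn_mem_peirceAnnSpan he hij hn hw y,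
        hA.mul_peirceAnn_mul_mem_peirceAnnSpan he hij hn hw y⟩
  | zero => simpa only [mul_zero, zero_mul] using ⟨zero_mem _, zero_mem _⟩
  | add a b _ _ ha hb => rw [mul_add, add_mul]; exact ⟨add_mem ha.1 hb.1, add_mem ha.2 hb.2⟩
  | neg a _ ha => rw [mul_neg, neg_mul]; exact ⟨neg_mem ha.1, neg_mem ha.2⟩

theorem eq_zero_or_eq_zero_of_mem_peirceAnn (hP : IsPrimeRing R) (he : e * e = e) (hij : i ≠ j)
    (hw : w ∈ peirceAnn e i j) (hm : m ∈ peirceSpace e i j) : w = 0 ∨ m = 0 := by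
  have hD := hA.isTwoSidedIdealSet_peirceAnnSpan he hij
  refine hP.eq_zero_or_eq_zero_of_mul_eq_zero hD
    (hA.isTwoSidedIdealSet_setOf_forall_mul_eq_zero hD) (fun d hd x hx => hx d hd)
    (AddSubgroup.subset_closure (Or.inl hw)) fun d hd => ?_
  induction hd using AddSubgroup.closure_induction with
  | mem g hg =>
    rcases hg with hw' | ⟨n, hn, w', hw', rfl⟩
    · exact hw'.2 m hm
    · exact hA.mul_peirceAnn_mul_eq_zero_ij he hij hn hw' hm
  | zero => exact zero_mul m
  | add a b _ _ ha hb => rw [add_mul, ha, hb, add_zero]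
  | neg a _ ha => rw [neg_mul, ha, neg_zero]

end IsAlternative

def peirceOffAnn (e : R) (i j : Bool) : AddSubgroup R where
  carrier := {x | x ∈ peirceSpace e j i ∧
    ∀ y ∈ (peirceSpace e i j : Set R) ∪ peirceSpace e j i, x * y = 0 ∧ y * x = 0}
  add_mem' := fun ⟨hx, hx'⟩ ⟨hy, hy'⟩ => ⟨add_mem hx hy, fun z hz => by
    rw [add_mul, mul_add, (hx' z hz).1, (hx' z hz).2, (hy' z hz).1, (hy' z hz).2, add_zero,
      and_self]⟩
  zero_mem' := ⟨zero_mem _, fun z _ => ⟨zero_mul z, mul_zero z⟩⟩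
  neg_mem' := fun ⟨hx, hx'⟩ => ⟨neg_mem hx, fun z hz => by
    rw [neg_mul, mul_neg, (hx' z hz).1, (hx' z hz).2, neg_zero, and_self]⟩

namespace IsAlternative

variable (hA : IsAlternative R) {e a b m n n' r s x : R} {i j : Bool}
include hA

theorem mul_mem_peirceOffAnn (hij : i ≠ j) (hx : x ∈ peirceOffAnn e i j)
    (hr : r ∈ peirceSpace e i i) : x * r ∈ peirceOffAnn e i j := by
  obtain ⟨hx, hx'⟩ := hx
  have hrx : r * x = 0 := hA.mul_eq_zero_of_peirceSpace hr hx hij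
  refine ⟨hA.mul_mem_peirceSpace hx hr, fun y hy => ?_⟩
  rcases hy with hm | hn
  · have h₁ := hA.associator_swap_left x r y
    simp only [associator_apply, hrx, (hx' y (Or.inl hm)).1,
      (hx' _ (Or.inl (hA.mul_mem_peirceSpace hr hm))).1, zero_mul, mul_zero] at h₁
    have h₂ := hA.associator_cyclic y x r
    simp only [associator_apply, (hx' y (Or.inl hm)).2,
      (hx' _ (Or.inl (hA.mul_mem_peirceSpace hr hm))).1, zero_mul] at h₂
    have hxry : x * r * y = 0 := by linear_combination (norm := abel1) h₁
    exact ⟨hxry, by linear_combination (norm := abel1) h₂ - hxry⟩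
  · have hry : r * y = 0 := hA.mul_eq_zero_of_peirceSpace hr hn hij
    have h₁ := hA.associator_swap_right x y r
    simp only [associator_apply, hry, (hx' y (Or.inr hn)).1,
      (hx' _ (Or.inr (hA.mul_mem_peirceSpace hn hr))).1, zero_mul, mul_zero] at h₁
    have h₂ := hA.associator_cyclic y x r
    simp only [associator_apply, hry, (hx' y (Or.inr hn)).2, zero_mul, mul_zero] at h₂
    have hxry : x * r * y = 0 := by linear_combination (norm := abel1) h₁
    exact ⟨hxry, by linear_combination (norm := abel1) h₂ - hxry⟩

theorem mul_mem_peirceOffAnn_left (hij : i ≠ j) (hx : x ∈ peirceOffAnn e i j)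
    (hs : s ∈ peirceSpace e j j) : s * x ∈ peirceOffAnn e i j := by
  obtain ⟨hx, hx'⟩ := hx
  have hxs : x * s = 0 := hA.mul_eq_zero_of_peirceSpace hx hs hij
  refine ⟨hA.mul_mem_peirceSpace hs hx, fun y hy => ?_⟩
  rcases hy with hm | hn
  · have h₁ := hA.associator_cyclic s x y
    simp only [associator_apply, (hx' y (Or.inl hm)).1,
      (hx' _ (Or.inl (hA.mul_mem_peirceSpace hm hs))).1, zero_mul, mul_zero] at h₁
    have h₂ := hA.associator_cyclic y s x
    simp only [associator_apply, (hx' y (Or.inl hm)).1,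
      (hx' _ (Or.inl (hA.mul_mem_peirceSpace hm hs))).2, mul_zero] at h₂
    have hsxy : s * x * y = 0 := by linear_combination (norm := abel1) -h₁
    exact ⟨hsxy, by linear_combination (norm := abel1) h₂ - hsxy⟩
  · have h₁ := hA.associator_swap_left x s y
    simp only [associator_apply, hxs, (hx' y (Or.inr hn)).1,
      (hx' _ (Or.inr (hA.mul_mem_peirceSpace hs hn))).1, zero_mul, mul_zero] at h₁
    have h₂ := hA.associator_cyclic y s x
    simp only [associator_apply, (hx' y (Or.inr hn)).1,
      hA.mul_eq_zero_of_peirceSpace hn hs hij, zero_mul, mul_zero] at h₂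
    have hsxy : s * x * y = 0 := by linear_combination (norm := abel1) h₁
    exact ⟨hsxy, by linear_combination (norm := abel1) h₂ - hsxy⟩

theorem isTwoSidedIdealSet_peirceOffAnn (he : e * e = e) (hij : i ≠ j) :
    IsTwoSidedIdealSet (peirceOffAnn e i j : Set R) := by
  refine isTwoSidedIdealSet_of_mul_mem _ fun y x hx => ?_
  obtain ⟨y₁, h₁, y₂, h₂, y₃, h₃, y₄, h₄, rfl⟩ :=
    hA.exists_peirceSpace_decomposition he hij y
  simp only [add_mul, mul_add, hx.2 y₂ (Or.inl h₂), hx.2 y₃ (Or.inr h₃),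
    hA.mul_eq_zero_of_peirceSpace h₁ hx.1 hij, hA.mul_eq_zero_of_peirceSpace hx.1 h₄ hij,
    add_zero, zero_add]
  exact ⟨hA.mul_mem_peirceOffAnn_left hij hx h₄, hA.mul_mem_peirceOffAnn hij hx h₁⟩

theorem eq_zero_of_mem_peirceOffAnn (hP : IsPrimeRing R) (he : e * e = e) (hij : i ≠ j)
    (hx : x ∈ peirceOffAnn e i j) : x = 0 :=
  have hT := hA.isTwoSidedIdealSet_peirceOffAnn he hij
  (hP.eq_zero_or_eq_zero_of_mul_eq_zero hT hT (fun _ ha b hb => (ha.2 b (Or.inr hb.1)).1)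
    hx hx).elim id id

theorem eq_zero_of_mem_peirceSpace_of_forall_eq_zero (hP : IsPrimeRing R) (he : e * e = e)
    (hij : i ≠ j) (h0 : ∀ m ∈ peirceSpace e i j, m = 0) (hn : n ∈ peirceSpace e j i) :
    n = 0 := by
  refine hA.eq_zero_of_mem_peirceOffAnn hP he hij ⟨hn, fun y hy => ?_⟩
  rcases hy with hy | hy
  · rw [h0 y hy, mul_zero, zero_mul]
    exact ⟨rfl, rfl⟩
  · exact ⟨h0 _ (hA.mul_mem_peirceSpace_of_ne hn hy hij.symm),
      h0 _ (hA.mul_mem_peirceSpace_of_ne hy hn hij.symm)⟩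

theorem isTwoSidedIdealSet_peirceSpace_of_forall_eq_zero (he : e * e = e) (hij : i ≠ j)
    (hij0 : ∀ m ∈ peirceSpace e i j, m = 0) (hji0 : ∀ m ∈ peirceSpace e j i, m = 0) :
    IsTwoSidedIdealSet (peirceSpace e i i : Set R) := by
  refine isTwoSidedIdealSet_of_mul_mem _ fun y x hx => ?_
  obtain ⟨y₁, h₁, y₂, h₂, y₃, h₃, y₄, h₄, rfl⟩ :=
    hA.exists_peirceSpace_decomposition he hij y
  rw [hij0 y₂ h₂, hji0 y₃ h₃]
  simp only [add_zero, add_mul, mul_add, hA.mul_eq_zero_of_peirceSpace_diag he h₄ hx hij.symm,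
    hA.mul_eq_zero_of_peirceSpace_diag he hx h₄ hij]
  exact ⟨hA.mul_mem_peirceSpace h₁ hx, hA.mul_mem_peirceSpace hx h₁⟩

theorem exists_ne_zero_mem_peirceSpace (hP : IsPrimeRing R) (he : IsNontrivialIdempotent e)
    (hij : i ≠ j) : ∃ m ∈ peirceSpace e i j, m ≠ 0 := by
  obtain ⟨he, he0, hid⟩ := he
  by_contra! h0
  obtain ⟨h₁₂, h₂₁⟩ :
      (∀ m ∈ peirceSpace e true false, m = 0) ∧
        ∀ m ∈ peirceSpace e false true, m = 0 := by
    cases i <;> cases j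
    · exact absurd rfl hij
    · exact ⟨fun _ => hA.eq_zero_of_mem_peirceSpace_of_forall_eq_zero hP he hij h0, h0⟩
    · exact ⟨h0, fun _ => hA.eq_zero_of_mem_peirceSpace_of_forall_eq_zero hP he hij h0⟩
    · exact absurd rfl hij
  have h₂₂ : ∀ y ∈ peirceSpace e false false, y = 0 := fun y hy =>
    (hP.eq_zero_or_eq_zero_of_mul_eq_zero
      (hA.isTwoSidedIdealSet_peirceSpace_of_forall_eq_zero he (by decide) h₁₂ h₂₁)
      (hA.isTwoSidedIdealSet_peirceSpace_of_forall_eq_zero he (by decide) h₂₁ h₁₂)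
      (fun _ ha _ hb => hA.mul_eq_zero_of_peirceSpace_diag he ha hb (by decide))
      (show e ∈ peirceSpace e true true from ⟨he, he⟩) hy).resolve_left he0
  refine hid fun x => ?_
  obtain ⟨x₁, h₁, x₂, h₂, x₃, h₃, x₄, h₄, rfl⟩ :=
    hA.exists_peirceSpace_decomposition he (i := true) (j := false) (by decide) x
  rw [h₁₂ x₂ h₂, h₂₁ x₃ h₃, h₂₂ x₄ h₄, add_zero, add_zero, add_zero]
  exact h₁


theorem commute_of_forall_mul_eq_mul (hP : IsPrimeRing R) (he : e * e = e) (hij : i ≠ j)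
    (hne : ∃ m ∈ peirceSpace e i j, m ≠ 0) (ha : a ∈ peirceSpace e i i)
    (hb : b ∈ peirceSpace e j j) (hab : ∀ m ∈ peirceSpace e i j, a * m = m * b)
    (hr : r ∈ peirceSpace e i i) : Commute a r := by
  obtain ⟨m₀, hm₀, hm₀0⟩ := hne
  have hW : a * r - r * a ∈ peirceAnn e i j := by
    refine ⟨sub_mem (hA.mul_mem_peirceSpace ha hr) (hA.mul_mem_peirceSpace hr ha),
      fun m hm => ?_⟩
    have hari := hA.associator_eq_zero_of_peirceSpace hij ha hr hm
    have hrai : associator r a m = 0 := by rw [hA.associator_swap_left a r m, hari, neg_zero]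
    have hrmb : associator r m b = 0 := by
      rw [← hA.associator_cyclic r m b, associator_apply,
        hA.mul_eq_zero_of_peirceSpace (hA.mul_mem_peirceSpace hm hb) hr hij.symm,
        hA.mul_eq_zero_of_peirceSpace_diag he hb hr hij.symm, mul_zero, sub_zero]
    rw [sub_mul, sub_eq_zero.1 hari, sub_eq_zero.1 hrai, hab _ (hA.mul_mem_peirceSpace hr hm),
      hab m hm, ← sub_eq_zero.1 hrmb, sub_self]
  exact sub_eq_zero.1
    ((hA.eq_zero_or_eq_zero_of_mem_peirceAnn hP he hij hW hm₀).resolve_right hm₀0)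

theorem mul_sub_mul_annihilates_peirceSpace_ij (he : e * e = e) (hij : i ≠ j)
    (ha : a ∈ peirceSpace e i i) (hb : b ∈ peirceSpace e j j)
    (hab : ∀ m ∈ peirceSpace e i j, a * m = m * b)
    (hu : ∀ r ∈ peirceSpace e i i, Commute a r) (hv : ∀ s ∈ peirceSpace e j j, Commute b s)
    (hn : n ∈ peirceSpace e j i) (hm : m ∈ peirceSpace e i j) :
    (b * n - n * a) * m = 0 ∧ m * (b * n - n * a) = 0 := by
  have hbm : b * m = 0 := hA.mul_eq_zero_of_peirceSpace hb hm hij.symm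
  have hma : m * a = 0 := hA.mul_eq_zero_of_peirceSpace hm ha hij.symm
  have han : a * n = 0 := hA.mul_eq_zero_of_peirceSpace ha hn hij
  have hnm := hA.mul_mem_peirceSpace hn hm
  have hmn := hA.mul_mem_peirceSpace hm hn
  have hbnm : associator b n m = 0 := by
    rw [hA.associator_swap_left n b m, associator_apply,
      hA.mul_eq_zero_of_peirceSpace hn hb hij, hbm, zero_mul, mul_zero, sub_zero, neg_zero]
  have hnam : associator n a m = 0 := by
    rw [hA.associator_swap_left a n m, associator_apply, han,
      hA.mul_eq_zero_of_peirceSpace_diag he ha hnm hij, zero_mul, sub_zero, neg_zero]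
  have hnmb : associator n m b = 0 := by rw [hA.associator_cyclic b n m, hbnm]
  have hman : associator m a n = 0 := by
    rw [associator_apply, hma, han, zero_mul, mul_zero, sub_zero]
  have hmbn : associator m b n = 0 := by
    rw [hA.associator_swap_left b m n, associator_apply, hbm,
      hA.mul_eq_zero_of_peirceSpace_diag he hb hmn hij.symm, zero_mul, sub_zero, neg_zero]
  have hamn : associator a m n = 0 := by rw [hA.associator_swap_left m a n, hman, neg_zero]
  have hmna : associator m n a = 0 := by rw [hA.associator_swap_right m a n, hman, neg_zero]
  constructor
  · rw [sub_mul, sub_eq_zero.1 hbnm, sub_eq_zero.1 hnam, hab m hm, ← sub_eq_zero.1 hnmb,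
      (hv _ hnm).eq, sub_self]
  · rw [mul_sub, ← sub_eq_zero.1 hmbn, ← hab m hm, sub_eq_zero.1 hamn, ← sub_eq_zero.1 hmna,
      (hu _ hmn).eq, sub_self]

theorem mul_sub_mul_annihilates_peirceSpace_ji (hij : i ≠ j) (ha : a ∈ peirceSpace e i i)
    (hb : b ∈ peirceSpace e j j) (hab : ∀ m ∈ peirceSpace e i j, a * m = m * b)
    (hn : n ∈ peirceSpace e j i) (hn' : n' ∈ peirceSpace e j i) :
    (b * n - n * a) * n' = 0 ∧ n' * (b * n - n * a) = 0 := by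
  have hnn' := hA.mul_mem_peirceSpace_of_ne hn hn' hij.symm
  have hn'b : n' * b = 0 := hA.mul_eq_zero_of_peirceSpace hn' hb hij
  have han : a * n = 0 := hA.mul_eq_zero_of_peirceSpace ha hn hij
  have han' : a * n' = 0 := hA.mul_eq_zero_of_peirceSpace ha hn' hij
  have h₁ := hA.associator_cyclic b n n'
  simp only [associator_apply, hn'b, hA.mul_eq_zero_of_peirceSpace hb hnn' hij.symm,
    mul_zero] at h₁
  have h₂ := hA.associator_swap_left a n n'
  simp only [associator_apply, han, han', zero_mul, mul_zero] at h₂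
  have h₃ := hA.associator_cyclic n n' b
  simp only [associator_apply, hn'b, zero_mul, mul_zero] at h₃
  have h₄ := hA.associator_cyclic n' n a
  simp only [associator_apply, han', mul_zero,
    hA.mul_eq_zero_of_peirceSpace (hA.mul_mem_peirceSpace_of_ne hn' hn hij.symm) ha
      hij.symm] at h₄
  have hbnn' : b * n * n' = n * n' * b := by linear_combination (norm := abel1) -h₁
  have hnan' : n * a * n' = a * (n * n') := by linear_combination (norm := abel1) h₂
  constructor
  · rw [sub_mul, hbnn', hnan', hab _ hnn', sub_self]
  · rw [mul_sub]
    linear_combination (norm := abel1) hab _ hnn' - h₃ - h₄ + h₂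

theorem mul_eq_mul_of_forall_mul_eq_mul (hP : IsPrimeRing R) (he : e * e = e) (hij : i ≠ j)
    (ha : a ∈ peirceSpace e i i) (hb : b ∈ peirceSpace e j j)
    (hab : ∀ m ∈ peirceSpace e i j, a * m = m * b)
    (hu : ∀ r ∈ peirceSpace e i i, Commute a r) (hv : ∀ s ∈ peirceSpace e j j, Commute b s)
    (hn : n ∈ peirceSpace e j i) : b * n = n * a :=
  sub_eq_zero.1 <| hA.eq_zero_of_mem_peirceOffAnn hP he hij
    ⟨sub_mem (hA.mul_mem_peirceSpace hb hn) (hA.mul_mem_peirceSpace hn ha), fun _ hy =>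
      hy.elim (hA.mul_sub_mul_annihilates_peirceSpace_ij he hij ha hb hab hu hv hn)
        (hA.mul_sub_mul_annihilates_peirceSpace_ji hij ha hb hab hn)⟩

theorem mem_ringCenter_of_forall_lieBr_eq_zero (htf : ThreeTorsionFree R) (hP : IsPrimeRing R)
    (he : IsNontrivialIdempotent e) (hij : i ≠ j) (ha : a ∈ peirceSpace e i i)
    (hb : b ∈ peirceSpace e j j)
    (h : ∀ m ∈ peirceSpace e i j, lieBr (a + b) m = 0) : a + b ∈ ringCenter R := by
  have he' : e * e = e := he.1
  obtain ⟨m₀, hm₀, hm₀0⟩ := hA.exists_ne_zero_mem_peirceSpace hP he hij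
  have hab : ∀ m ∈ peirceSpace e i j, a * m = m * b := fun m hm => by
    have := h m hm
    rwa [lieBr, add_mul, mul_add, hA.mul_eq_zero_of_peirceSpace hb hm hij.symm,
      hA.mul_eq_zero_of_peirceSpace hm ha hij.symm, add_zero, zero_add, sub_eq_zero] at this
  have hu : ∀ r ∈ peirceSpace e i i, Commute a r := fun r hr =>
    hA.commute_of_forall_mul_eq_mul hP he' hij ⟨m₀, hm₀, hm₀0⟩ ha hb hab hr
  -- `hu` for `Rᵐᵒᵖ`, in which `R_ij` and `R_ji` trade places, with the indices exchanged
  have hv : ∀ s ∈ peirceSpace e j j, Commute b s := fun s hs =>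
    (hA.mulOpposite.commute_of_forall_mul_eq_mul hP.mulOpposite (e := op e)
      (by rw [← op_mul, he']) hij.symm
      ⟨op m₀, mem_peirceSpace_op.2 hm₀, (op_ne_zero_iff m₀).2 hm₀0⟩
      (mem_peirceSpace_op.2 hb) (mem_peirceSpace_op.2 ha)
      (fun m hm => unop_injective (hab _ (mem_peirceSpace_op.1 hm)).symm)
      (mem_peirceSpace_op.2 hs)).unop
  have ht : ∀ n ∈ peirceSpace e j i, b * n = n * a := fun n hn =>
    hA.mul_eq_mul_of_forall_mul_eq_mul hP he' hij ha hb hab hu hv hn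
  refine hA.mem_ringCenter_of_forall_commute htf fun x => ?_
  obtain ⟨x₁, h₁, x₂, h₂, x₃, h₃, x₄, h₄, rfl⟩ :=
    hA.exists_peirceSpace_decomposition he' hij x
  simp only [add_mul, mul_add, hA.mul_eq_zero_of_peirceSpace ha h₃ hij,
    hA.mul_eq_zero_of_peirceSpace_diag he' ha h₄ hij,
    hA.mul_eq_zero_of_peirceSpace_diag he' hb h₁ hij.symm,
    hA.mul_eq_zero_of_peirceSpace hb h₂ hij.symm, hA.mul_eq_zero_of_peirceSpace h₂ ha hij.symm,
    hA.mul_eq_zero_of_peirceSpace_diag he' h₄ ha hij.symm,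
    hA.mul_eq_zero_of_peirceSpace_diag he' h₁ hb hij, hA.mul_eq_zero_of_peirceSpace h₃ hb hij]
  rw [(hu x₁ h₁).eq, hab x₂ h₂, ht x₃ h₃, (hv x₄ h₄).eq]
  abel

end IsAlternative

end AlternativeRings

theorem prime_satisfies_conditions
    {R : Type*} [NonUnitalNonAssocRing R]
    (hR : IsAlternative R) (htf : ThreeTorsionFree R) (hprime : IsPrimeRing R)
    (e : R) (he : IsNontrivialIdempotent e) :
    CondI e ∧ CondII e := by
  refine ⟨fun a b ha hb h => ?_, fun a b ha hb h => ?_⟩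
  · exact hR.mem_ringCenter_of_forall_lieBr_eq_zero htf hprime he (i := true) (j := false)
      (by decide) ha hb h
  · rw [add_comm]
    refine hR.mem_ringCenter_of_forall_lieBr_eq_zero htf hprime he (i := false) (j := true)
      (by decide) hb ha fun m hm => ?_
    rw [add_comm]
    exact h m hm
end
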